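/- arXiv:1310.2262 — 5 statements merged into one kernel-verified Lean document; each statement's English description precedes it below -/
import Mathlib

section
/- Let d ≥ 3 and n ≥ 1. Suppose V : ℝ^d → [0,∞) is measurable and satisfies sup_{x∈ℝ^d} ∫_{ℝ^d} V(y) |x−y|^{2−d} dy < ∞. Define W : ℝ^d × ℝ^n → [0,∞) by W(x₁,x₂) := V(x₁). Then W satisfies the corresponding condition in dimension d+n, i.e. sup_{(x₁,x₂)∈ℝ^{d+n}} ∫_{ℝ^{d+n}} V(y₁) |(x₁,x₂) − (y₁,y₂)|^{2−(d+n)} dy₁ dy₂ < ∞. -/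
/-!
Write `x = (x₁, x₂)` and `y = (y₁, y₂)` with `x₁, y₁ ∈ ℝ^d`, `x₂, y₂ ∈ ℝ^n`, and `s = 2 - d - n`.
For fixed `y₁ ≠ x₁`, translating and rescaling by `c = |x₁ - y₁|` gives
`∫ (c² + |x₂ - y₂|²)^(s/2) dy₂ = c^(s+n) ∫ (1 + |b|²)^(s/2) db = C · |x₁ - y₁|^(2-d)`,
and `C < ∞` because `s + n = 2 - d < 0`. By Tonelli the `(d+n)`-dimensional integral of
`V(y₁) |x - y|^s` is therefore `C ∫ V(y₁) |x₁ - y₁|^(2-d) dy₁`, which is bounded uniformly in `x`.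
-/

open MeasureTheory ENNReal Module

section
variable {E : Type*} [NormedAddCommGroup E] [NormedSpace ℝ E] [FiniteDimensional ℝ E]
  [MeasurableSpace E] [BorelSpace E] (μ : Measure E) [μ.IsAddHaarMeasure]

theorem lintegral_one_add_norm_sq_rpow_lt_top {s : ℝ} (hs : s + finrank ℝ E < 0) :
    ∫⁻ b, ENNReal.ofReal ((1 + ‖b‖ ^ 2) ^ (s / 2)) ∂μ < ⊤ := by
  have := (integrable_rpow_neg_one_add_norm_sq (μ := μ) (r := -s) (by linarith)).lintegral_lt_top
  simpa only [neg_neg] using this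

theorem lintegral_sq_add_norm_sub_sq_rpow (x : E) {c : ℝ} (hc : 0 < c) (s : ℝ) :
    ∫⁻ b, ENNReal.ofReal ((c ^ 2 + ‖x - b‖ ^ 2) ^ (s / 2)) ∂μ
      = ENNReal.ofReal (c ^ (s + finrank ℝ E)) *
        ∫⁻ b, ENNReal.ofReal ((1 + ‖b‖ ^ 2) ^ (s / 2)) ∂μ := by
  have hsplit : ∀ b : E, (c ^ 2 + ‖b‖ ^ 2) ^ (s / 2) = c ^ s * (1 + ‖c⁻¹ • b‖ ^ 2) ^ (s / 2) := by
    intro b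
    have : c ^ 2 + ‖b‖ ^ 2 = c ^ 2 * (1 + ‖c⁻¹ • b‖ ^ 2) := by
      rw [norm_smul, Real.norm_eq_abs, abs_inv, abs_of_pos hc]
      field_simp
    rw [this, Real.mul_rpow (by positivity) (by positivity), ← Real.rpow_natCast,
      ← Real.rpow_mul hc.le, Nat.cast_ofNat, mul_div_cancel₀ s two_ne_zero]
  have hscale := lintegral_map (μ := μ) (f := fun b => ENNReal.ofReal ((1 + ‖b‖ ^ 2) ^ (s / 2)))
    (by fun_prop) (measurable_const_smul c⁻¹)
  rw [Measure.map_addHaar_smul μ (inv_ne_zero hc.ne'), lintegral_smul_measure] at hscale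
  calc ∫⁻ b, ENNReal.ofReal ((c ^ 2 + ‖x - b‖ ^ 2) ^ (s / 2)) ∂μ
      = ∫⁻ b, ENNReal.ofReal ((c ^ 2 + ‖b‖ ^ 2) ^ (s / 2)) ∂μ :=
        lintegral_sub_left_eq_self (fun b => ENNReal.ofReal ((c ^ 2 + ‖b‖ ^ 2) ^ (s / 2))) x
    _ = ENNReal.ofReal (c ^ s) * ∫⁻ b, ENNReal.ofReal ((1 + ‖c⁻¹ • b‖ ^ 2) ^ (s / 2)) ∂μ := by
        simp_rw [hsplit, ENNReal.ofReal_mul (Real.rpow_nonneg hc.le s)]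
        exact lintegral_const_mul _ (by fun_prop)
    _ = _ := by
        rw [← hscale, smul_eq_mul, ← mul_assoc, ← ENNReal.ofReal_mul (by positivity), inv_pow,
          inv_inv, abs_of_pos (by positivity), ← Real.rpow_natCast, ← Real.rpow_add hc]
end

section
variable {U V : Type*}
  [NormedAddCommGroup U] [InnerProductSpace ℝ U] [FiniteDimensional ℝ U] [Nontrivial U]
  [MeasurableSpace U] [BorelSpace U]
  [NormedAddCommGroup V] [InnerProductSpace ℝ V] [FiniteDimensional ℝ V]
  [MeasurableSpace V] [BorelSpace V]

theorem lintegral_mul_norm_sub_rpow_withLp_prod {f : U → ℝ} (hf : Measurable f)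
    (x : WithLp 2 (U × V)) (s : ℝ) :
    ∫⁻ y : WithLp 2 (U × V), ENNReal.ofReal (f y.fst * ‖x - y‖ ^ s)
      = (∫⁻ a, ENNReal.ofReal (f a * ‖x.fst - a‖ ^ (s + finrank ℝ V))) *
        ∫⁻ b : V, ENNReal.ofReal ((1 + ‖b‖ ^ 2) ^ (s / 2)) := by
  have hnorm : ∀ p : U × V,
      ‖x - WithLp.toLp 2 p‖ ^ s = (‖x.fst - p.1‖ ^ 2 + ‖x.snd - p.2‖ ^ 2) ^ (s / 2) := by
    intro p
    have hsq : ‖x - WithLp.toLp 2 p‖ ^ 2 = ‖x.fst - p.1‖ ^ 2 + ‖x.snd - p.2‖ ^ 2 :=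
      WithLp.prod_norm_sq_eq_of_L2 (x - WithLp.toLp 2 p)
    rw [← hsq, ← Real.rpow_natCast, ← Real.rpow_mul (norm_nonneg _),
      Nat.cast_ofNat, mul_div_cancel₀ s two_ne_zero]
  have hinner : ∀ᵐ a ∂(volume : Measure U),
      ∫⁻ b : V, ENNReal.ofReal (f a * (‖x.fst - a‖ ^ 2 + ‖x.snd - b‖ ^ 2) ^ (s / 2))
        = ENNReal.ofReal (f a * ‖x.fst - a‖ ^ (s + finrank ℝ V)) *
          ∫⁻ b : V, ENNReal.ofReal ((1 + ‖b‖ ^ 2) ^ (s / 2)) := by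
    -- the slice `a = x.fst`, where the rescaling breaks down, is null
    filter_upwards [Measure.ae_ne volume x.fst] with a ha
    have hc : 0 < ‖x.fst - a‖ := norm_pos_iff.mpr (sub_ne_zero.mpr ha.symm)
    rw [lintegral_congr fun b => ENNReal.ofReal_mul' (by positivity),
      lintegral_const_mul _ (by fun_prop), lintegral_sq_add_norm_sub_sq_rpow _ _ hc, ← mul_assoc,
      ENNReal.ofReal_mul' (by positivity)]
  calc ∫⁻ y : WithLp 2 (U × V), ENNReal.ofReal (f y.fst * ‖x - y‖ ^ s)
      = ∫⁻ p : U × V, ENNReal.ofReal (f p.1 * ‖x - WithLp.toLp 2 p‖ ^ s) :=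
        ((WithLp.volume_preserving_symm_measurableEquiv_toLp_prod U V).symm.lintegral_comp_emb
          (MeasurableEquiv.toLp 2 (U × V)).measurableEmbedding _).symm
    _ = ∫⁻ a, ∫⁻ b : V, ENNReal.ofReal (f a * (‖x.fst - a‖ ^ 2 + ‖x.snd - b‖ ^ 2) ^ (s / 2)) := by
        simp_rw [hnorm]
        rw [Measure.volume_eq_prod, lintegral_prod _ (by fun_prop)]
    _ = ∫⁻ a, ENNReal.ofReal (f a * ‖x.fst - a‖ ^ (s + finrank ℝ V)) *
          ∫⁻ b : V, ENNReal.ofReal ((1 + ‖b‖ ^ 2) ^ (s / 2)) := lintegral_congr_ae hinner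
    _ = _ := lintegral_mul_const _ (by fun_prop)
end

noncomputable def EuclideanSpace.finAddLinearIsometryEquivProd (𝕜 : Type*) [RCLike 𝕜] (m n : ℕ) :
    EuclideanSpace 𝕜 (Fin (m + n)) ≃ₗᵢ[𝕜]
      WithLp 2 (EuclideanSpace 𝕜 (Fin m) × EuclideanSpace 𝕜 (Fin n)) :=
  (LinearIsometryEquiv.piLpCongrLeft 2 𝕜 𝕜 finSumFinEquiv.symm).trans
    (PiLp.sumPiLpEquivProdLpPiLp 2 _)

theorem EuclideanSpace.finAddLinearIsometryEquivProd_fst (𝕜 : Type*) [RCLike 𝕜] {m n : ℕ}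
    (y : EuclideanSpace 𝕜 (Fin (m + n))) :
    (finAddLinearIsometryEquivProd 𝕜 m n y).fst =
      WithLp.toLp 2 (fun i => y (Fin.castAdd n i)) :=
  rfl

theorem stmt_1_general (d n : ℕ) (hd : 3 ≤ d)
    (V : EuclideanSpace ℝ (Fin d) → ℝ) (hVmeas : Measurable V)
    (hK : (⨆ x : EuclideanSpace ℝ (Fin d),
        ∫⁻ y, ENNReal.ofReal (V y * ‖x - y‖ ^ ((2 : ℝ) - d))) < ⊤) :
    (⨆ x : EuclideanSpace ℝ (Fin (d + n)),
        ∫⁻ y : EuclideanSpace ℝ (Fin (d + n)),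
          ENNReal.ofReal (V (WithLp.toLp 2 (fun i => y (Fin.castAdd n i))) *
            ‖x - y‖ ^ ((2 : ℝ) - ((d : ℝ) + n)))) < ⊤ := by
  have : NeZero d := ⟨by omega⟩
  let ψ := EuclideanSpace.finAddLinearIsometryEquivProd ℝ d n
  have hd' : (3 : ℝ) ≤ d := by exact_mod_cast hd
  have hC := lintegral_one_add_norm_sq_rpow_lt_top (volume : Measure (EuclideanSpace ℝ (Fin n)))
    (s := 2 - (d + n)) (by rw [finrank_euclideanSpace_fin]; linarith)
  refine lt_of_le_of_lt (iSup_le fun x => ?_) (ENNReal.mul_lt_top hK hC)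
  calc _ = ∫⁻ z, ENNReal.ofReal (V z.fst * ‖ψ x - z‖ ^ ((2 : ℝ) - (d + n))) := by
        rw [← ψ.measurePreserving.lintegral_comp_emb ψ.toMeasurableEquiv.measurableEmbedding]
        simp only [ψ, EuclideanSpace.finAddLinearIsometryEquivProd_fst, ← map_sub,
          LinearIsometryEquiv.norm_map]
    _ = (∫⁻ a, ENNReal.ofReal (V a * ‖(ψ x).fst - a‖ ^ ((2 : ℝ) - d))) *
          ∫⁻ b : EuclideanSpace ℝ (Fin n),
            ENNReal.ofReal ((1 + ‖b‖ ^ 2) ^ ((2 - (d + n) : ℝ) / 2)) := by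
        rw [lintegral_mul_norm_sub_rpow_withLp_prod hVmeas, finrank_euclideanSpace_fin,
          show (2 : ℝ) - (d + n) + n = 2 - d by ring]
    _ ≤ _ := by
        gcongr
        exact le_iSup (fun x' => ∫⁻ y, ENNReal.ofReal (V y * ‖x' - y‖ ^ ((2 : ℝ) - d))) (ψ x).fst

/-- If `V ≥ 0` on `ℝ^d`, `d ≥ 3`, satisfies condition (K), then
`W(x₁,x₂) := V(x₁)` on `ℝ^{d+n}` satisfies condition (K) in dimension `d+n`. -/
theorem stmt_1 (d n : ℕ) (hd : 3 ≤ d) (hn : 1 ≤ n)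
    (V : EuclideanSpace ℝ (Fin d) → ℝ) (hVmeas : Measurable V) (hV0 : ∀ y, 0 ≤ V y)
    (hK : (⨆ x : EuclideanSpace ℝ (Fin d),
        ∫⁻ y, ENNReal.ofReal (V y * ‖x - y‖ ^ ((2 : ℝ) - d))) < ⊤) :
    (⨆ x : EuclideanSpace ℝ (Fin (d + n)),
        ∫⁻ y : EuclideanSpace ℝ (Fin (d + n)),
          ENNReal.ofReal (V (WithLp.toLp 2 (fun i => y (Fin.castAdd n i))) *
            ‖x - y‖ ^ ((2 : ℝ) - ((d : ℝ) + n)))) < ⊤ :=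
  stmt_1_general d n hd V hVmeas hK
end

section
/- Let d ≥ 1 and let n, β be real numbers with n > 2 and β > 0. Define g(x) = (1+|x|)^{−n−β} and g_s(x) = s^{−n/2} g(x/√s) for s > 0. Then there is a constant C > 0, depending only on d, n, β, such that for every t > 0 and every x ∈ ℝ^d with x ≠ 0, ∫_0^t g_s(x) ds ≤ C |x|^{2−n} (1 + |x|/√t)^{−2−β}. -/
open MeasureTheory ENNReal

/-!
Write `r = ‖x‖` and `g(s) = s^{-n/2} (1 + r/√s)^{-n-β}`. Dropping the `1` gives
`g(s) ≤ r^{-n-β} s^{β/2}`, and dropping `r/√s` gives `g(s) ≤ s^{-n/2}`. Integrating the first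
bound over `(0, t]` gives `∫₀ᵗ g ≲ r^{2-n} (√t/r)^{2+β}`; integrating it over `(0, r²]` and the
second over `(r², ∞)` gives `∫₀^∞ g ≲ r^{2-n}`. With `a = r/√t`, the minimum `min 1 (a⁻¹)^{2+β}`
of the two factors is at most `2^{2+β} (1 + a)^{-2-β}`, according as `a ≤ 1` or not.
-/

noncomputable def decayKernel (n β r s : ℝ) : ℝ :=
  s ^ (-n / 2) * (1 + r / Real.sqrt s) ^ (-n - β)

lemma lintegral_Ioc_ofReal_rpow {p T : ℝ} (hp : -1 < p) (hT : 0 ≤ T) :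
    ∫⁻ s in Set.Ioc 0 T, ENNReal.ofReal (s ^ p) = ENNReal.ofReal (T ^ (p + 1) / (p + 1)) := by
  rw [← ofReal_integral_eq_lintegral_ofReal]
  · rw [← intervalIntegral.integral_of_le hT, integral_rpow (Or.inl hp),
      Real.zero_rpow (by linarith), sub_zero]
  · exact (intervalIntegral.intervalIntegrable_rpow' hp).1
  · filter_upwards [ae_restrict_mem measurableSet_Ioc] with s hs
    exact Real.rpow_nonneg hs.1.le p

lemma lintegral_Ioi_ofReal_rpow {p c : ℝ} (hp : p < -1) (hc : 0 < c) :
    ∫⁻ s in Set.Ioi c, ENNReal.ofReal (s ^ p) = ENNReal.ofReal (-c ^ (p + 1) / (p + 1)) := by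
  rw [← ofReal_integral_eq_lintegral_ofReal, integral_Ioi_rpow_of_lt hp hc]
  · exact integrableOn_Ioi_rpow_of_lt hp hc
  · filter_upwards [ae_restrict_mem measurableSet_Ioi] with s hs
    exact Real.rpow_nonneg (hc.trans hs).le p

section decayKernel

variable {n β r : ℝ}

lemma decayKernel_le_rpow_mul_rpow (hr : 0 < r) (hnβ : 0 ≤ n + β) {s : ℝ} (hs : 0 < s) :
    decayKernel n β r s ≤ r ^ (-(n + β)) * s ^ (β / 2) := by
  have hrs : 0 < r / Real.sqrt s := div_pos hr (Real.sqrt_pos.mpr hs)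
  have hdrop : (1 + r / Real.sqrt s) ^ (-n - β) ≤ (r / Real.sqrt s) ^ (-n - β) :=
    Real.rpow_le_rpow_of_nonpos hrs (by linarith) (by linarith)
  have hratio : (r / Real.sqrt s) ^ (-n - β) = r ^ (-(n + β)) * s ^ ((n + β) / 2) := by
    rw [Real.div_rpow hr.le (Real.sqrt_nonneg s), Real.sqrt_eq_rpow, ← Real.rpow_mul hs.le,
      show 1 / 2 * (-n - β) = -((n + β) / 2) by ring, Real.rpow_neg hs.le, div_inv_eq_mul,
      neg_add']
  calc decayKernel n β r s ≤ s ^ (-n / 2) * (r ^ (-(n + β)) * s ^ ((n + β) / 2)) :=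
        mul_le_mul_of_nonneg_left (hdrop.trans_eq hratio) (Real.rpow_nonneg hs.le _)
    _ = r ^ (-(n + β)) * s ^ (β / 2) := by
        rw [mul_left_comm, ← Real.rpow_add hs]
        ring_nf

lemma decayKernel_le_rpow (hr : 0 ≤ r) (hnβ : 0 ≤ n + β) {s : ℝ} (hs : 0 ≤ s) :
    decayKernel n β r s ≤ s ^ (-n / 2) :=
  mul_le_of_le_one_right (Real.rpow_nonneg hs _) <|
    Real.rpow_le_one_of_one_le_of_nonpos
      (le_add_of_nonneg_right (div_nonneg hr (Real.sqrt_nonneg s))) (by linarith)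

lemma lintegral_Ioc_decayKernel_le (hr : 0 < r) (hnβ : 0 ≤ n + β) (hβ : -2 < β) {t : ℝ}
    (ht : 0 ≤ t) :
    ∫⁻ s in Set.Ioc 0 t, ENNReal.ofReal (decayKernel n β r s) ≤
      ENNReal.ofReal (2 / (2 + β) * r ^ (2 - n) * (Real.sqrt t / r) ^ (2 + β)) := by
  have hscale : r ^ (-(n + β)) * t ^ ((2 + β) / 2) = r ^ (2 - n) * (Real.sqrt t / r) ^ (2 + β) := by
    rw [Real.div_rpow (Real.sqrt_nonneg t) hr.le, Real.sqrt_eq_rpow, ← Real.rpow_mul ht,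
      mul_div_assoc', mul_div_right_comm, ← Real.rpow_sub hr]
    congr 2 <;> ring
  calc ∫⁻ s in Set.Ioc 0 t, ENNReal.ofReal (decayKernel n β r s)
      ≤ ∫⁻ s in Set.Ioc 0 t, ENNReal.ofReal (r ^ (-(n + β))) * ENNReal.ofReal (s ^ (β / 2)) :=
        setLIntegral_mono (by fun_prop) fun s hs => by
          rw [← ENNReal.ofReal_mul (Real.rpow_nonneg hr.le _)]
          exact ENNReal.ofReal_le_ofReal (decayKernel_le_rpow_mul_rpow hr hnβ hs.1)
    _ = ENNReal.ofReal (2 / (2 + β) * (r ^ (-(n + β)) * t ^ ((2 + β) / 2))) := by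
        rw [lintegral_const_mul' _ _ ofReal_ne_top, lintegral_Ioc_ofReal_rpow (by linarith) ht,
          ← ENNReal.ofReal_mul (Real.rpow_nonneg hr.le _)]
        congr 1
        field_simp
        ring_nf
    _ = ENNReal.ofReal (2 / (2 + β) * r ^ (2 - n) * (Real.sqrt t / r) ^ (2 + β)) := by
        rw [hscale, mul_assoc]

lemma lintegral_Ioi_decayKernel_le (hr : 0 < r) (hn : 2 < n) (hβ : -2 < β) :
    ∫⁻ s in Set.Ioi 0, ENNReal.ofReal (decayKernel n β r s) ≤
      ENNReal.ofReal ((2 / (2 + β) + 2 / (n - 2)) * r ^ (2 - n)) := by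
  have hr2 : 0 < r ^ 2 := by positivity
  have hnβ : 0 ≤ n + β := by linarith
  have hnear := lintegral_Ioc_decayKernel_le hr hnβ hβ hr2.le
  rw [Real.sqrt_sq hr.le, div_self hr.ne', Real.one_rpow, mul_one] at hnear
  have hfar : ∫⁻ s in Set.Ioi (r ^ 2), ENNReal.ofReal (decayKernel n β r s) ≤
      ENNReal.ofReal (2 / (n - 2) * r ^ (2 - n)) := by
    have hexp : -(r ^ 2) ^ (-n / 2 + 1) / (-n / 2 + 1) = 2 / (n - 2) * r ^ (2 - n) := by
      rw [← Real.rpow_natCast_mul hr.le, neg_div, ← div_neg, Nat.cast_ofNat,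
        show 2 * (-n / 2 + 1) = 2 - n by ring, show -(-n / 2 + 1) = (n - 2) / 2 by ring,
        div_div_eq_mul_div]
      ring
    rw [← hexp, ← lintegral_Ioi_ofReal_rpow (by linarith) hr2]
    exact setLIntegral_mono (by fun_prop) fun s hs =>
      ENNReal.ofReal_le_ofReal (decayKernel_le_rpow hr.le hnβ (hr2.trans hs).le)
  rw [← Set.Ioc_union_Ioi_eq_Ioi hr2.le, add_mul]
  refine (lintegral_union_le _ _ _).trans ((add_le_add hnear hfar).trans_eq ?_)
  rw [← ENNReal.ofReal_add]
  · have : 0 < 2 + β := by linarith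
    positivity
  · have : 0 < n - 2 := by linarith
    positivity

end decayKernel

lemma min_one_inv_rpow_le {a p : ℝ} (ha : 0 < a) (hp : 0 ≤ p) :
    min 1 (a⁻¹ ^ p) ≤ 2 ^ p * (1 + a) ^ (-p) := by
  have h2p : (2 : ℝ) ^ p * 2 ^ (-p) = 1 := by
    rw [← Real.rpow_add two_pos, add_neg_cancel, Real.rpow_zero]
  rcases le_total a 1 with ha1 | ha1
  · calc min 1 (a⁻¹ ^ p) ≤ 2 ^ p * 2 ^ (-p) := (min_le_left _ _).trans h2p.ge
      _ ≤ 2 ^ p * (1 + a) ^ (-p) := by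
          gcongr 2 ^ p * ?_
          exact Real.rpow_le_rpow_of_nonpos (by linarith) (by linarith) (by linarith)
  · calc min 1 (a⁻¹ ^ p) ≤ 2 ^ p * (2 * a) ^ (-p) := by
          rw [Real.mul_rpow zero_le_two ha.le, ← mul_assoc, h2p, one_mul, Real.rpow_neg ha.le,
            ← Real.inv_rpow ha.le]
          exact min_le_right _ _
      _ ≤ 2 ^ p * (1 + a) ^ (-p) := by
          gcongr 2 ^ p * ?_
          exact Real.rpow_le_rpow_of_nonpos (by linarith) (by linarith) (by linarith)

theorem stmt_3_general (d : ℕ) (n β : ℝ) (hn : 2 < n) (hβ : 0 < β) :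
    ∃ C > 0, ∀ t : ℝ, 0 < t → ∀ x : EuclideanSpace ℝ (Fin d), x ≠ 0 →
      ∫⁻ s in Set.Ioc (0 : ℝ) t,
          ENNReal.ofReal (s ^ (-n / 2) * (1 + ‖x‖ / Real.sqrt s) ^ (-n - β)) ≤
        ENNReal.ofReal (C * ‖x‖ ^ ((2 : ℝ) - n) * (1 + ‖x‖ / Real.sqrt t) ^ (-2 - β)) := by
  have hβ2 : 0 < 2 + β := by linarith
  have hn2 : 0 < n - 2 := by linarith
  set K := 2 / (2 + β) + 2 / (n - 2)
  refine ⟨2 ^ (2 + β) * K, by positivity, fun t ht x hx => ?_⟩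
  have hr : 0 < ‖x‖ := norm_pos_iff.mpr hx
  have hwhole := (lintegral_mono_set (Set.Ioc_subset_Ioi_self : Set.Ioc 0 t ⊆ _)).trans
    (lintegral_Ioi_decayKernel_le (β := β) hr hn (by linarith))
  have hnear := lintegral_Ioc_decayKernel_le (n := n) (β := β) hr (by linarith) (by linarith) ht.le
  rw [← inv_div ‖x‖ (Real.sqrt t)] at hnear
  set a := ‖x‖ / Real.sqrt t
  have ha : 0 < a := div_pos hr (Real.sqrt_pos.mpr ht)
  calc ∫⁻ s in Set.Ioc 0 t, ENNReal.ofReal (decayKernel n β ‖x‖ s)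
      ≤ ENNReal.ofReal (K * ‖x‖ ^ (2 - n) * min 1 (a⁻¹ ^ (2 + β))) := by
        rw [mul_min_of_nonneg _ _ (by positivity), mul_one, ENNReal.ofReal_min]
        refine le_min hwhole (hnear.trans (ENNReal.ofReal_le_ofReal ?_))
        gcongr
        exact le_add_of_nonneg_right (by positivity)
    _ ≤ ENNReal.ofReal (K * ‖x‖ ^ (2 - n) * (2 ^ (2 + β) * (1 + a) ^ (-(2 + β)))) := by
        gcongr
        exact min_one_inv_rpow_le ha hβ2.le
    _ = ENNReal.ofReal (2 ^ (2 + β) * K * ‖x‖ ^ (2 - n) * (1 + a) ^ (-2 - β)) := by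
        rw [neg_add']
        ring_nf

/-- For `n > 2`, `β > 0`, `g_s(x) = s^{-n/2}(1+|x|/√s)^{-n-β}`, one has
`∫_0^t g_s(x) ds ≤ C |x|^{2-n} (1+|x|/√t)^{-2-β}` for `t > 0`, `x ≠ 0`. -/
theorem stmt_3 (d : ℕ) (hd : 1 ≤ d) (n β : ℝ) (hn : 2 < n) (hβ : 0 < β) :
    ∃ C > 0, ∀ t : ℝ, 0 < t → ∀ x : EuclideanSpace ℝ (Fin d), x ≠ 0 →
      ∫⁻ s in Set.Ioc (0 : ℝ) t,
          ENNReal.ofReal (s ^ (-n / 2) * (1 + ‖x‖ / Real.sqrt s) ^ (-n - β)) ≤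
        ENNReal.ofReal (C * ‖x‖ ^ ((2 : ℝ) - n) * (1 + ‖x‖ / Real.sqrt t) ^ (-2 - β)) :=
  stmt_3_general d n β hn hβ
end

section
/- Let d ≥ 3, 1 < q < ∞, ε > 0 and 0 < δ₀ ≤ 1. Then there is a constant C > 0 such that the following holds. Let w : ℝ^d → ℝ be measurable with δ₀ ≤ w(x) ≤ 1 for almost every x, and let b be a (1,q,ε,w)-molecule associated with a ball B = B(x₀,r), i.e. (∫_B |b|^q)^{1/q} ≤ |B|^{1/q−1}, (∫_{2^k B ∖ 2^{k−1} B} |b|^q)^{1/q} ≤ |2^k B|^{1/q−1} 2^{−εk} for all integers k ≥ 1, and ∫_{ℝ^d} b(x) w(x) dx = 0. Then there exist complex numbers λ_n and functions a_n, n ≥ 1, such that each a_n is a (1,q,w)-atom (i.e. there is a ball B_n with supp a_n ⊂ B_n, ‖a_n‖_{L^q} ≤ |B_n|^{1/q−1}, and ∫ a_n(x) w(x) dx = 0), b = Σ_{n=1}^∞ λ_n a_n with the series converging in L^1(ℝ^d), and Σ_{n=1}^∞ |λ_n| ≤ C. -/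
/-!
Write `Bₖ = B(x₀, 2ᵏr)`, `Aₖ = Bₖ \ Bₖ₋₁` (`A₀ = B₀`), `mₖ = ∫_{Aₖ} b w`, `Mₖ = ∑_{j ≥ k} mⱼ` and
`φₖ = 1_{Bₖ} / ∫_{Bₖ} w`, so that `∫ φₖ w = 1`. The pieces `b 1_{Aₖ} + Mₖ₊₁ φₖ₊₁ - Mₖ φₖ` live on
`Bₖ₊₁` and have `w`-mean `mₖ + Mₖ₊₁ - Mₖ = 0`. Since `M₀ = ∫ b w = 0`, their partial sums telescope
to `b 1_{Bₙ₋₁} + Mₙ φₙ`, which tends to `b` in `L¹`. By Hölder the molecule bounds give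
`|mₖ| ≤ 2^{-εk}`, hence `|Mₖ| ≲ 2^{-εk}`; together with `‖φₖ‖_q ≤ δ₀⁻¹ |Bₖ|^{1/q-1}` and the
doubling `|Bₖ₊₁| = 2ᵈ |Bₖ|`, the `k`-th piece is `C 2^{-εk}` times a `(1,q,w)`-atom
supported in `Bₖ₊₁`.
-/

open MeasureTheory ENNReal Filter Topology Set Function Metric Module

section TailSum

variable {G : Type*} [NormedAddCommGroup G]

noncomputable def tailSum (m : ℕ → G) (k : ℕ) : G := ∑' j, m (j + k)

lemma tailSum_zero (m : ℕ → G) : tailSum m 0 = ∑' j, m j := rfl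

lemma tailSum_eq_add {m : ℕ → G} (hm : Summable m) (k : ℕ) :
    tailSum m k = m k + tailSum m (k + 1) := by
  rw [tailSum, ((summable_nat_add_iff k).2 hm).tsum_eq_zero_add, zero_add, tailSum]
  simp only [add_assoc, add_comm 1 k]

lemma tendsto_tailSum (m : ℕ → G) : Tendsto (tailSum m) atTop (𝓝 0) :=
  tendsto_sum_nat_add m

lemma norm_tailSum_le_geometric {m : ℕ → G} {ρ : ℝ} (hρ₀ : 0 ≤ ρ) (hρ₁ : ρ < 1)
    (hm : ∀ k, ‖m k‖ ≤ ρ ^ k) (k : ℕ) : ‖tailSum m k‖ ≤ ρ ^ k / (1 - ρ) := by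
  refine tsum_of_norm_bounded (g := fun j => ρ ^ k * ρ ^ j) ?_ fun j => ?_
  · rw [div_eq_mul_inv]
    exact (hasSum_geometric_of_lt_one hρ₀ hρ₁).mul_left _
  · simpa [pow_add, mul_comm] using hm (j + k)

end TailSum

section NormalizedIndicator

variable {X : Type*} [MeasurableSpace X] {μ : Measure X} {w : X → ℝ} {B : Set X} {δ : ℝ}

noncomputable def normalizedIndicator (μ : Measure X) (w : X → ℝ) (B : Set X) : X → ℂ :=
  B.indicator fun _ => ((∫ x in B, w x ∂μ)⁻¹ : ℝ)

lemma mul_measureReal_le_setIntegral (hμB : μ B ≠ ∞) (hδw : ∀ᵐ x ∂μ, δ ≤ w x)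
    (hw : IntegrableOn w B μ) : δ * μ.real B ≤ ∫ x in B, w x ∂μ := by
  calc δ * μ.real B = ∫ _ in B, δ ∂μ := by rw [setIntegral_const, smul_eq_mul, mul_comm]
    _ ≤ ∫ x in B, w x ∂μ :=
      setIntegral_mono_ae_restrict (integrableOn_const hμB) hw (ae_restrict_of_ae hδw)

lemma integrable_normalizedIndicator (hB : MeasurableSet B) (hμB : μ B ≠ ∞) :
    Integrable (normalizedIndicator μ w B) μ :=
  (integrable_indicator_iff hB).2 (integrableOn_const hμB)

variable (hμB₀ : μ B ≠ 0) (hμB : μ B ≠ ∞) (hδ : 0 < δ) (hδw : ∀ᵐ x ∂μ, δ ≤ w x)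
  (hw : IntegrableOn w B μ)
include hμB₀ hμB hδ hδw hw

lemma setIntegral_pos_of_const_le : 0 < ∫ x in B, w x ∂μ :=
  (mul_pos hδ (ENNReal.toReal_pos hμB₀ hμB)).trans_le (mul_measureReal_le_setIntegral hμB hδw hw)

lemma enorm_inv_setIntegral_le :
    ‖(((∫ x in B, w x ∂μ)⁻¹ : ℝ) : ℂ)‖ₑ ≤ ENNReal.ofReal δ⁻¹ * (μ B)⁻¹ := by
  have hW := setIntegral_pos_of_const_le hμB₀ hμB hδ hδw hw
  have hμ := ENNReal.toReal_pos hμB₀ hμB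
  rw [← ofReal_norm, Complex.norm_real, Real.norm_of_nonneg (inv_nonneg.2 hW.le),
    ← ofReal_toReal hμB, ← ofReal_inv_of_pos hμ, ← ENNReal.ofReal_mul (by positivity), ← mul_inv]
  exact ENNReal.ofReal_le_ofReal
    (inv_anti₀ (by positivity) (mul_measureReal_le_setIntegral hμB hδw hw))

variable (hB : MeasurableSet B)
include hB

lemma integral_normalizedIndicator_mul : ∫ x, normalizedIndicator μ w B x * w x ∂μ = 1 := by
  have hW := setIntegral_pos_of_const_le hμB₀ hμB hδ hδw hw
  have : (fun x => normalizedIndicator μ w B x * w x) =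
      B.indicator fun x => (((∫ x in B, w x ∂μ)⁻¹ : ℝ) : ℂ) * w x := by
    ext x
    by_cases hx : x ∈ B <;> simp [normalizedIndicator, hx]
  rw [this, integral_indicator hB, integral_const_mul, integral_complex_ofReal,
    ← Complex.ofReal_mul, inv_mul_cancel₀ hW.ne', Complex.ofReal_one]

lemma eLpNorm_normalizedIndicator_le {p : ℝ≥0∞} (hp₀ : p ≠ 0) (hp : p ≠ ∞) :
    eLpNorm (normalizedIndicator μ w B) p μ ≤ ENNReal.ofReal δ⁻¹ * μ B ^ (1 / p.toReal - 1) := by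
  rw [normalizedIndicator, eLpNorm_indicator_const hB hp₀ hp, rpow_sub _ _ hμB₀ hμB, rpow_one,
    ENNReal.div_eq_inv_mul, ← mul_assoc]
  gcongr
  exact enorm_inv_setIntegral_le hμB₀ hμB hδ hδw hw

lemma integral_norm_normalizedIndicator_le : ∫ x, ‖normalizedIndicator μ w B x‖ ∂μ ≤ δ⁻¹ := by
  have h := eLpNorm_normalizedIndicator_le hμB₀ hμB hδ hδw hw hB one_ne_zero one_ne_top
  rw [eLpNorm_one_eq_lintegral_enorm, toReal_one, div_one, sub_self, rpow_zero, mul_one] at h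
  rw [integral_norm_eq_lintegral_enorm ?_]
  · exact toReal_le_of_le_ofReal (inv_nonneg.2 hδ.le) h
  · exact (measurable_const.indicator hB).aestronglyMeasurable

end NormalizedIndicator

section TelescopingPiece

variable {X : Type*} {A : ℕ → Set X} {f : X → ℂ} {g : ℕ → X → ℂ} {M : ℕ → ℂ}

noncomputable def telescopingPiece (A : ℕ → Set X) (f : X → ℂ) (g : ℕ → X → ℂ) (M : ℕ → ℂ)
    (k : ℕ) : X → ℂ :=
  (A k).indicator f + (M (k + 1) • g (k + 1) - M k • g k)

lemma sum_range_telescopingPiece (hA : Pairwise (Disjoint on A)) (hM : M 0 = 0) (N : ℕ) :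
    ∑ k ∈ Finset.range N, telescopingPiece A f g M k =
      (⋃ k ∈ Finset.range N, A k).indicator f + M N • g N := by
  simp only [telescopingPiece, Finset.sum_add_distrib, Finset.sum_range_sub (fun k => M k • g k),
    hM, zero_smul, sub_zero, Finset.indicator_biUnion _ _ (hA.set_pairwise _)]
  ext x
  simp only [Pi.add_apply, Finset.sum_apply]

lemma support_telescopingPiece_subset {S : Set X} {k : ℕ} (hA : A k ⊆ S)
    (hg : support (g k) ⊆ S) (hg' : support (g (k + 1)) ⊆ S) :
    support (telescopingPiece A f g M k) ⊆ S := by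
  refine (support_add _ _).trans (union_subset ?_ ?_)
  · exact support_indicator_subset.trans hA
  · refine (support_sub _ _).trans (union_subset ?_ ?_)
    · exact (support_const_smul_subset _ _).trans hg'
    · exact (support_const_smul_subset _ _).trans hg

variable [MeasurableSpace X] {μ : Measure X}

lemma integral_telescopingPiece_mul_eq_zero {w : X → ℝ} {k : ℕ} (hA : MeasurableSet (A k))
    (hfw : IntegrableOn (fun x => f x * w x) (A k) μ)
    (hgw : ∀ j, Integrable (fun x => g j x * w x) μ) (hg : ∀ j, ∫ x, g j x * w x ∂μ = 1)
    (hM : ∫ x in A k, f x * w x ∂μ = M k - M (k + 1)) :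
    ∫ x, telescopingPiece A f g M k x * w x ∂μ = 0 := by
  have hsplit : (fun x => telescopingPiece A f g M k x * w x) =
      (A k).indicator (fun x => f x * w x) +
        ((fun x => M (k + 1) * (g (k + 1) x * w x)) - fun x => M k * (g k x * w x)) := by
    ext x
    simp only [telescopingPiece, Pi.add_apply, Pi.sub_apply, Pi.smul_apply, smul_eq_mul,
      indicator_mul_left]
    ring
  have hg₁ : Integrable (fun x => M (k + 1) * (g (k + 1) x * w x)) μ := (hgw _).const_mul _
  have hg₀ : Integrable (fun x => M k * (g k x * w x)) μ := (hgw _).const_mul _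
  rw [hsplit, integral_add' ((integrable_indicator_iff hA).2 hfw) (hg₁.sub hg₀),
    integral_sub' hg₁ hg₀, integral_indicator hA,
    integral_const_mul, integral_const_mul, hg, hg, hM]
  ring

lemma eLpNorm_telescopingPiece_le {p : ℝ≥0∞} (hp : 1 ≤ p) {k : ℕ} (hA : MeasurableSet (A k))
    (hf : AEStronglyMeasurable f μ) (hg : ∀ j, AEStronglyMeasurable (g j) μ) :
    eLpNorm (telescopingPiece A f g M k) p μ ≤ eLpNorm f p (μ.restrict (A k)) +
      (‖M (k + 1)‖ₑ * eLpNorm (g (k + 1)) p μ + ‖M k‖ₑ * eLpNorm (g k) p μ) := by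
  rw [← eLpNorm_indicator_eq_eLpNorm_restrict hA, ← eLpNorm_const_smul, ← eLpNorm_const_smul]
  refine (eLpNorm_add_le (hf.indicator hA) (((hg _).const_smul _).sub ((hg _).const_smul _))
    hp).trans (add_le_add le_rfl ?_)
  exact eLpNorm_sub_le ((hg _).const_smul _) ((hg _).const_smul _) hp

lemma integral_norm_sub_sum_telescopingPiece_le (hf : Integrable f μ)
    (hAm : ∀ k, MeasurableSet (A k)) (hA : Pairwise (Disjoint on A)) (hM₀ : M 0 = 0) (N : ℕ)
    (hg : Integrable (g N) μ) :
    ∫ x, ‖f x - ∑ k ∈ Finset.range N, telescopingPiece A f g M k x‖ ∂μ ≤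
      ∫ x in (⋃ k ∈ Finset.range N, A k)ᶜ, ‖f x‖ ∂μ + ‖M N‖ * ∫ x, ‖g N x‖ ∂μ := by
  set T := ⋃ k ∈ Finset.range N, A k
  have hT : MeasurableSet T := Finset.measurableSet_biUnion _ fun k _ => hAm k
  have hdiff : ∀ x, f x - ∑ k ∈ Finset.range N, telescopingPiece A f g M k x =
      (Tᶜ.indicator f - M N • g N) x := by
    intro x
    rw [← Finset.sum_apply, sum_range_telescopingPiece hA hM₀, Pi.sub_apply, Pi.add_apply,
      ← indicator_self_add_compl_apply T f x]
    ring
  have hfT : Integrable (Tᶜ.indicator f) μ := hf.indicator hT.compl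
  calc ∫ x, ‖f x - ∑ k ∈ Finset.range N, telescopingPiece A f g M k x‖ ∂μ
      = ∫ x, ‖(Tᶜ.indicator f - M N • g N) x‖ ∂μ := by simp_rw [hdiff]
    _ ≤ ∫ x, (‖Tᶜ.indicator f x‖ + ‖M N‖ * ‖g N x‖) ∂μ := by
      refine integral_mono (hfT.sub (hg.smul _)).norm (hfT.norm.add (hg.norm.const_mul _))
        fun x => ?_
      simpa [norm_smul] using norm_sub_le (Tᶜ.indicator f x) (M N • g N x)
    _ = ∫ x in Tᶜ, ‖f x‖ ∂μ + ‖M N‖ * ∫ x, ‖g N x‖ ∂μ := by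
      rw [integral_add hfT.norm (hg.norm.const_mul _), integral_const_mul,
        ← integral_indicator hT.compl]
      simp_rw [norm_indicator_eq_indicator_norm]

lemma tendsto_integral_norm_sub_sum_telescopingPiece (hf : Integrable f μ)
    (hAm : ∀ k, MeasurableSet (A k)) (hA : Pairwise (Disjoint on A)) (hAU : ⋃ k, A k = univ)
    (hM₀ : M 0 = 0) (hM : Tendsto M atTop (𝓝 0)) (hg : ∀ j, Integrable (g j) μ) {D : ℝ}
    (hD : ∀ j, ∫ x, ‖g j x‖ ∂μ ≤ D) :
    Tendsto (fun N => ∫ x, ‖f x - ∑ k ∈ Finset.range N, telescopingPiece A f g M k x‖ ∂μ)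
      atTop (𝓝 0) := by
  have hI : ⋂ N, (⋃ k ∈ Finset.range N, A k)ᶜ = ∅ := by
    rw [← compl_iUnion, compl_empty_iff, eq_univ_iff_forall]
    intro x
    obtain ⟨k, hk⟩ := mem_iUnion.1 (hAU ▸ mem_univ x)
    exact mem_iUnion.2 ⟨k + 1, mem_iUnion₂.2 ⟨k, Finset.self_mem_range_succ k, hk⟩⟩
  have hcompl : Tendsto (fun N => ∫ x in (⋃ k ∈ Finset.range N, A k)ᶜ, ‖f x‖ ∂μ) atTop (𝓝 0) := by
    have := tendsto_setIntegral_of_antitone (f := fun x => ‖f x‖)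
      (s := fun N => (⋃ k ∈ Finset.range N, A k)ᶜ)
      (fun N => (Finset.measurableSet_biUnion _ fun k _ => hAm k).compl)
      (fun a b hab => compl_subset_compl.2 (biUnion_subset_biUnion_left (by simpa using hab)))
      ⟨0, hf.norm.integrableOn⟩
    rwa [hI, Measure.restrict_empty, integral_zero_measure] at this
  refine squeeze_zero (g := fun N => ∫ x in (⋃ k ∈ Finset.range N, A k)ᶜ, ‖f x‖ ∂μ + ‖M N‖ * D)
    (fun N => integral_nonneg fun x => norm_nonneg _) (fun N => ?_)
    (by simpa using hcompl.add (hM.norm.mul_const D))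
  exact (integral_norm_sub_sum_telescopingPiece_le hf hAm hA hM₀ N (hg N)).trans
    (add_le_add le_rfl (mul_le_mul_of_nonneg_left (hD N) (norm_nonneg _)))

end TelescopingPiece

section DyadicBall

variable {X : Type*} [PseudoMetricSpace X] {x₀ : X} {r : ℝ}

def dyadicBall (x₀ : X) (r : ℝ) (k : ℕ) : Set X := ball x₀ (2 ^ k * r)

def dyadicAnnulus (x₀ : X) (r : ℝ) : ℕ → Set X := disjointed (dyadicBall x₀ r)

lemma monotone_dyadicBall (hr : 0 ≤ r) : Monotone (dyadicBall x₀ r) := fun _ _ hij =>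
  ball_subset_ball (mul_le_mul_of_nonneg_right (pow_le_pow_right₀ one_le_two hij) hr)

lemma iUnion_dyadicBall (hr : 0 < r) : ⋃ k, dyadicBall x₀ r k = univ := by
  refine eq_univ_of_forall fun x => mem_iUnion.2 ?_
  obtain ⟨k, hk⟩ := pow_unbounded_of_one_lt (dist x x₀ / r) one_lt_two
  exact ⟨k, mem_ball.2 ((div_lt_iff₀ hr).1 hk)⟩

lemma dyadicAnnulus_zero : dyadicAnnulus x₀ r 0 = ball x₀ r := by
  simp [dyadicAnnulus, dyadicBall]

lemma dyadicAnnulus_succ (hr : 0 ≤ r) (k : ℕ) :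
    dyadicAnnulus x₀ r (k + 1) = dyadicBall x₀ r (k + 1) \ dyadicBall x₀ r k :=
  (monotone_dyadicBall hr).disjointed_add_one k

lemma dyadicAnnulus_subset (k : ℕ) : dyadicAnnulus x₀ r k ⊆ dyadicBall x₀ r k :=
  disjointed_subset _ k

lemma pairwise_disjoint_dyadicAnnulus : Pairwise (Disjoint on dyadicAnnulus x₀ r) :=
  disjoint_disjointed _

lemma iUnion_dyadicAnnulus (hr : 0 < r) : ⋃ k, dyadicAnnulus x₀ r k = univ := by
  rw [dyadicAnnulus, iUnion_disjointed, iUnion_dyadicBall hr]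

variable [MeasurableSpace X] [OpensMeasurableSpace X]

lemma measurableSet_dyadicBall (k : ℕ) : MeasurableSet (dyadicBall x₀ r k) := measurableSet_ball

lemma measurableSet_dyadicAnnulus (k : ℕ) : MeasurableSet (dyadicAnnulus x₀ r k) :=
  MeasurableSet.disjointed measurableSet_dyadicBall k

end DyadicBall

section Doubling

variable {E : Type*} [NormedAddCommGroup E] [NormedSpace ℝ E] [MeasurableSpace E] [BorelSpace E]
  [FiniteDimensional ℝ E] (μ : Measure E) [μ.IsAddHaarMeasure]

lemma measure_ball_two_mul (x : E) {t : ℝ} (ht : 0 < t) :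
    μ (ball x (2 * t)) = ENNReal.ofReal (2 ^ finrank ℝ E) * μ (ball x t) := by
  rw [Measure.addHaar_ball_of_pos μ x (by positivity), Measure.addHaar_ball_of_pos μ x ht, mul_pow,
    ENNReal.ofReal_mul (by positivity), mul_assoc]

lemma measure_ball_rpow_le_two_mul (x : E) {t s : ℝ} (ht : 0 < t) (hs : -1 ≤ s) :
    μ (ball x t) ^ s ≤ ENNReal.ofReal (2 ^ finrank ℝ E) * μ (ball x (2 * t)) ^ s := by
  set c := ENNReal.ofReal (2 ^ finrank ℝ E)
  have hc : 1 ≤ c := by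
    rw [← ENNReal.ofReal_one]; exact ENNReal.ofReal_le_ofReal (one_le_pow₀ one_le_two)
  have hcs : 1 ≤ c * c ^ s := calc
    1 = c * c ^ (-1 : ℝ) := by
      rw [rpow_neg_one, ENNReal.mul_inv_cancel (zero_lt_one.trans_le hc).ne' ofReal_ne_top]
    _ ≤ c * c ^ s := by gcongr
  rw [measure_ball_two_mul μ x ht, ENNReal.mul_rpow_of_ne_top ofReal_ne_top measure_ball_lt_top.ne,
    ← mul_assoc]
  exact le_mul_of_one_le_left' hcs

lemma rpow_measure_dyadicBall_le_succ {x₀ : E} {r : ℝ} (hr : 0 < r) {s : ℝ} (hs : -1 ≤ s) (k : ℕ) :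
    μ (dyadicBall x₀ r k) ^ s ≤
      ENNReal.ofReal (2 ^ finrank ℝ E) * μ (dyadicBall x₀ r (k + 1)) ^ s := by
  rw [dyadicBall, dyadicBall, pow_succ', mul_assoc]
  exact measure_ball_rpow_le_two_mul μ x₀ (by positivity) hs

end Doubling

section LocalIntegrability

variable {X : Type*} [MeasurableSpace X] {μ : Measure X} {f : X → ℂ}

lemma eLpNorm_ofReal_eq {q : ℝ} (hq : 0 < q) (f : X → ℂ) (μ : Measure X) :
    eLpNorm f (ENNReal.ofReal q) μ = (∫⁻ x, ENNReal.ofReal ‖f x‖ ^ q ∂μ) ^ (1 / q) := by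
  simp_rw [eLpNorm_eq_lintegral_rpow_enorm_toReal (ofReal_pos.2 hq).ne' ofReal_ne_top,
    toReal_ofReal hq.le, ofReal_norm]

lemma setLIntegral_enorm_le_of_eLpNorm_le {A B : Set X} {p c : ℝ≥0∞} (hp : 1 ≤ p)
    (hf : AEStronglyMeasurable f μ) (hAB : A ⊆ B) (hB₀ : μ B ≠ 0) (hB : μ B ≠ ∞)
    (h : eLpNorm f p (μ.restrict A) ≤ μ B ^ (1 / p.toReal - 1) * c) :
    ∫⁻ x in A, ‖f x‖ₑ ∂μ ≤ c := by
  have hp₁ : 1 / p.toReal ≤ 1 := by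
    rcases eq_or_ne p ∞ with rfl | hp'
    · simp
    · exact div_le_one_of_le₀ (by simpa using ENNReal.toReal_mono hp' hp) toReal_nonneg
  calc ∫⁻ x in A, ‖f x‖ₑ ∂μ = eLpNorm f 1 (μ.restrict A) := eLpNorm_one_eq_lintegral_enorm.symm
    _ ≤ eLpNorm f p (μ.restrict A) * μ A ^ (1 - 1 / p.toReal) := by
      simpa using eLpNorm_le_eLpNorm_mul_rpow_measure_univ hp hf.restrict
    _ ≤ μ B ^ (1 / p.toReal - 1) * c * μ B ^ (1 - 1 / p.toReal) := by
      gcongr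
    _ = c := by
      rw [mul_right_comm, ← rpow_add _ _ hB₀ hB, sub_add_sub_cancel, sub_self, rpow_zero, one_mul]

lemma integrable_of_setLIntegral_enorm_le_geometric {A : ℕ → Set X} {ρ : ℝ}
    (hf : AEStronglyMeasurable f μ) (hAU : ⋃ k, A k = univ) (hρ₀ : 0 ≤ ρ) (hρ₁ : ρ < 1)
    (hfA : ∀ k, ∫⁻ x in A k, ‖f x‖ₑ ∂μ ≤ ENNReal.ofReal (ρ ^ k)) : Integrable f μ := by
  refine ⟨hf, ?_⟩
  calc ∫⁻ x, ‖f x‖ₑ ∂μ = ∫⁻ x in ⋃ k, A k, ‖f x‖ₑ ∂μ := by rw [hAU, Measure.restrict_univ]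
    _ ≤ ∑' k, ∫⁻ x in A k, ‖f x‖ₑ ∂μ := lintegral_iUnion_le _ _
    _ ≤ ∑' k, ENNReal.ofReal (ρ ^ k) := ENNReal.tsum_le_tsum hfA
    _ < ∞ := by
      rw [← ENNReal.ofReal_tsum_of_nonneg (fun k => by positivity)
        (summable_geometric_of_lt_one hρ₀ hρ₁)]
      exact ofReal_lt_top

lemma integrableOn_of_abs_le_one {w : X → ℝ} {s : Set X} (hs : μ s ≠ ∞)
    (hw : AEStronglyMeasurable w μ) (hw₁ : ∀ᵐ x ∂μ, |w x| ≤ 1) : IntegrableOn w s μ :=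
  Measure.integrableOn_of_bounded hs hw (M := 1) (ae_restrict_of_ae hw₁)

lemma MeasureTheory.Integrable.mul_ofReal_of_abs_le_one {w : X → ℝ} (hf : Integrable f μ)
    (hw : AEStronglyMeasurable w μ) (hw₁ : ∀ᵐ x ∂μ, |w x| ≤ 1) :
    Integrable (fun x => f x * w x) μ :=
  hf.mul_bdd (Complex.continuous_ofReal.comp_aestronglyMeasurable hw)
    (hw₁.mono fun x hx => by rwa [Complex.norm_real])

lemma norm_setIntegral_mul_le {w : X → ℝ} {A : Set X} {c : ℝ} (hc : 0 ≤ c)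
    (hw : ∀ᵐ x ∂μ, |w x| ≤ 1) (hfA : ∫⁻ x in A, ‖f x‖ₑ ∂μ ≤ ENNReal.ofReal c) :
    ‖∫ x in A, f x * w x ∂μ‖ ≤ c := by
  refine (norm_integral_le_lintegral_norm _).trans (toReal_le_of_le_ofReal hc ?_)
  refine le_trans (lintegral_mono_ae ?_) hfA
  filter_upwards [ae_restrict_of_ae hw] with x hx
  rw [← ofReal_norm, norm_mul, Complex.norm_real, Real.norm_eq_abs]
  exact ENNReal.ofReal_le_ofReal (mul_le_of_le_one_right (norm_nonneg _) hx)

end LocalIntegrability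

section Molecule

variable {X : Type*} [PseudoMetricSpace X] [MeasurableSpace X] {μ : Measure X} {w : X → ℝ}
  {x₀ : X} {r ρ δ : ℝ} {f : X → ℂ} {p : ℝ≥0∞}

noncomputable def annulusMass (μ : Measure X) (w : X → ℝ) (x₀ : X) (r : ℝ) (f : X → ℂ) (k : ℕ) :
    ℂ :=
  ∫ x in dyadicAnnulus x₀ r k, f x * w x ∂μ

noncomputable def moleculePiece (μ : Measure X) (w : X → ℝ) (x₀ : X) (r : ℝ) (f : X → ℂ) :
    ℕ → X → ℂ :=
  telescopingPiece (dyadicAnnulus x₀ r) f (fun k => normalizedIndicator μ w (dyadicBall x₀ r k))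
    (tailSum (annulusMass μ w x₀ r f))

lemma support_moleculePiece_subset (hr : 0 ≤ r) (k : ℕ) :
    support (moleculePiece μ w x₀ r f k) ⊆ dyadicBall x₀ r (k + 1) :=
  support_telescopingPiece_subset
    ((dyadicAnnulus_subset k).trans (monotone_dyadicBall hr k.le_succ))
    (support_indicator_subset.trans (monotone_dyadicBall hr k.le_succ)) support_indicator_subset

section Size

variable [ProperSpace X] [IsFiniteMeasureOnCompacts μ] [μ.IsOpenPosMeasure]

lemma setLIntegral_enorm_dyadicAnnulus_le (hp : 1 ≤ p) (hf : AEStronglyMeasurable f μ)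
    (hr : 0 < r) (hsize : ∀ k, eLpNorm f p (μ.restrict (dyadicAnnulus x₀ r k)) ≤
      μ (dyadicBall x₀ r k) ^ (1 / p.toReal - 1) * ENNReal.ofReal (ρ ^ k)) (k : ℕ) :
    ∫⁻ x in dyadicAnnulus x₀ r k, ‖f x‖ₑ ∂μ ≤ ENNReal.ofReal (ρ ^ k) :=
  setLIntegral_enorm_le_of_eLpNorm_le hp hf (dyadicAnnulus_subset k)
    (measure_ball_pos μ x₀ (by positivity)).ne' measure_ball_lt_top.ne (hsize k)

lemma norm_annulusMass_le (hp : 1 ≤ p) (hf : AEStronglyMeasurable f μ) (hr : 0 < r)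
    (hw₁ : ∀ᵐ x ∂μ, |w x| ≤ 1) (hρ₀ : 0 ≤ ρ)
    (hsize : ∀ k, eLpNorm f p (μ.restrict (dyadicAnnulus x₀ r k)) ≤
      μ (dyadicBall x₀ r k) ^ (1 / p.toReal - 1) * ENNReal.ofReal (ρ ^ k)) (k : ℕ) :
    ‖annulusMass μ w x₀ r f k‖ ≤ ρ ^ k :=
  norm_setIntegral_mul_le (by positivity) hw₁
    (setLIntegral_enorm_dyadicAnnulus_le hp hf hr hsize k)

lemma integrable_of_eLpNorm_dyadicAnnulus_le (hp : 1 ≤ p) (hf : AEStronglyMeasurable f μ)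
    (hr : 0 < r) (hρ₀ : 0 ≤ ρ) (hρ₁ : ρ < 1)
    (hsize : ∀ k, eLpNorm f p (μ.restrict (dyadicAnnulus x₀ r k)) ≤
      μ (dyadicBall x₀ r k) ^ (1 / p.toReal - 1) * ENNReal.ofReal (ρ ^ k)) : Integrable f μ :=
  integrable_of_setLIntegral_enorm_le_geometric hf (iUnion_dyadicAnnulus hr) hρ₀ hρ₁
    (setLIntegral_enorm_dyadicAnnulus_le hp hf hr hsize)

end Size

section Cancellation

variable [OpensMeasurableSpace X]

lemma hasSum_annulusMass (hr : 0 < r) (hfw : Integrable (fun x => f x * w x) μ) :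
    HasSum (annulusMass μ w x₀ r f) (∫ x, f x * w x ∂μ) := by
  have := hasSum_integral_iUnion (measurableSet_dyadicAnnulus (x₀ := x₀) (r := r))
    pairwise_disjoint_dyadicAnnulus hfw.integrableOn
  rwa [iUnion_dyadicAnnulus hr, Measure.restrict_univ] at this

variable [ProperSpace X] [IsFiniteMeasureOnCompacts μ] [μ.IsOpenPosMeasure]

lemma integral_moleculePiece_mul_eq_zero (hδ : 0 < δ) (hw : AEStronglyMeasurable w μ)
    (hδw : ∀ᵐ x ∂μ, δ ≤ w x) (hw₁ : ∀ᵐ x ∂μ, |w x| ≤ 1) (hr : 0 < r) (hf : Integrable f μ)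
    (k : ℕ) : ∫ x, moleculePiece μ w x₀ r f k x * w x ∂μ = 0 := by
  have hfw := hf.mul_ofReal_of_abs_le_one hw hw₁
  refine integral_telescopingPiece_mul_eq_zero (measurableSet_dyadicAnnulus k) hfw.integrableOn
    (fun j => Integrable.mul_ofReal_of_abs_le_one
      (integrable_normalizedIndicator measurableSet_ball measure_ball_lt_top.ne) hw hw₁)
    (fun j => integral_normalizedIndicator_mul (measure_ball_pos μ x₀ (by positivity)).ne'
      measure_ball_lt_top.ne hδ hδw
      (integrableOn_of_abs_le_one measure_ball_lt_top.ne hw hw₁)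
      measurableSet_ball) ?_
  rw [tailSum_eq_add (hasSum_annulusMass hr hfw).summable, add_sub_cancel_right]
  rfl

lemma tendsto_integral_norm_sub_sum_moleculePiece (hδ : 0 < δ) (hw : AEStronglyMeasurable w μ)
    (hδw : ∀ᵐ x ∂μ, δ ≤ w x) (hw₁ : ∀ᵐ x ∂μ, |w x| ≤ 1) (hr : 0 < r) (hf : Integrable f μ)
    (hcancel : ∫ x, f x * w x ∂μ = 0) :
    Tendsto (fun N => ∫ x, ‖f x - ∑ k ∈ Finset.range N, moleculePiece μ w x₀ r f k x‖ ∂μ)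
      atTop (𝓝 0) := by
  have hm := hasSum_annulusMass (x₀ := x₀) hr (hf.mul_ofReal_of_abs_le_one hw hw₁)
  rw [hcancel] at hm
  exact tendsto_integral_norm_sub_sum_telescopingPiece hf measurableSet_dyadicAnnulus
    pairwise_disjoint_dyadicAnnulus (iUnion_dyadicAnnulus hr) (by rw [tailSum_zero, hm.tsum_eq])
    (tendsto_tailSum _)
    (fun j => integrable_normalizedIndicator measurableSet_ball measure_ball_lt_top.ne)
    (fun j => integral_norm_normalizedIndicator_le (measure_ball_pos μ x₀ (by positivity)).ne'
      measure_ball_lt_top.ne hδ hδw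
      (integrableOn_of_abs_le_one measure_ball_lt_top.ne hw hw₁)
      measurableSet_ball)

end Cancellation

end Molecule

section HardyAtom

variable {X : Type*} [PseudoMetricSpace X] [MeasurableSpace X] {μ : Measure X} {w : X → ℝ}
  {p : ℝ≥0∞}

/-- A `(1, p, w)`-atom. -/
def IsHardyAtom (μ : Measure X) (w : X → ℝ) (p : ℝ≥0∞) (a : X → ℂ) : Prop :=
  ∃ y t, 0 < t ∧ support a ⊆ ball y t ∧ eLpNorm a p μ ≤ μ (ball y t) ^ (1 / p.toReal - 1) ∧
    ∫ x, a x * w x ∂μ = 0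

lemma isHardyAtom_inv_smul {a : X → ℂ} {y : X} {t c : ℝ} (ht : 0 < t) (hc : 0 < c)
    (hsupp : support a ⊆ ball y t)
    (hLp : eLpNorm a p μ ≤ ENNReal.ofReal c * μ (ball y t) ^ (1 / p.toReal - 1))
    (hcancel : ∫ x, a x * w x ∂μ = 0) : IsHardyAtom μ w p (((c⁻¹ : ℝ) : ℂ) • a) := by
  refine ⟨y, t, ht, (support_const_smul_subset _ _).trans hsupp, ?_, ?_⟩
  · rw [eLpNorm_const_smul, ← ofReal_norm, Complex.norm_real, Real.norm_of_nonneg (by positivity)]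
    calc ENNReal.ofReal c⁻¹ * eLpNorm a p μ
        ≤ ENNReal.ofReal c⁻¹ * (ENNReal.ofReal c * μ (ball y t) ^ (1 / p.toReal - 1)) := by
          gcongr
      _ = μ (ball y t) ^ (1 / p.toReal - 1) := by
          rw [← mul_assoc, ← ENNReal.ofReal_mul (by positivity), inv_mul_cancel₀ hc.ne',
            ENNReal.ofReal_one, one_mul]
  · simp only [Pi.smul_apply, smul_eq_mul, mul_assoc, integral_const_mul, hcancel, mul_zero]

end HardyAtom

section Decomposition

variable {E : Type*} [NormedAddCommGroup E] [NormedSpace ℝ E] [MeasurableSpace E] [BorelSpace E]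
  [FiniteDimensional ℝ E] {μ : Measure E} [μ.IsAddHaarMeasure] {w : E → ℝ} {x₀ : E}
  {r ρ δ : ℝ} {f : E → ℂ} {p : ℝ≥0∞}

/-- `2ⁿ` pays for passing from `Bₖ` to `Bₖ₊₁`; `1` and the two `1 / (δ (1 - ρ))` bound the three
terms of a piece. -/
noncomputable def moleculeConstant (n : ℕ) (δ ρ : ℝ) : ℝ := 2 ^ n * (1 + 2 / (δ * (1 - ρ)))

lemma moleculeConstant_pos (n : ℕ) (hδ : 0 < δ) (hρ : ρ < 1) : 0 < moleculeConstant n δ ρ := by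
  have : 0 < 1 - ρ := by linarith
  unfold moleculeConstant
  positivity

lemma ofReal_moleculeConstant_mul_pow {n : ℕ} (hδ : 0 < δ) (hρ₀ : 0 ≤ ρ) (hρ₁ : ρ < 1) (k : ℕ) :
    ENNReal.ofReal (moleculeConstant n δ ρ * ρ ^ k) = ENNReal.ofReal (2 ^ n) *
      (ENNReal.ofReal (ρ ^ k) + 2 * (ENNReal.ofReal (ρ ^ k / (1 - ρ)) * ENNReal.ofReal δ⁻¹)) := by
  have h1ρ : 0 < 1 - ρ := by linarith
  have : moleculeConstant n δ ρ * ρ ^ k = 2 ^ n * (ρ ^ k + 2 * (ρ ^ k / (1 - ρ) * δ⁻¹)) := by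
    unfold moleculeConstant
    field_simp
  rw [this, ENNReal.ofReal_mul (by positivity), ENNReal.ofReal_add (by positivity) (by positivity),
    ENNReal.ofReal_mul (by positivity), ENNReal.ofReal_mul (by positivity), ENNReal.ofReal_ofNat]

lemma eLpNorm_moleculePiece_le (hp : 1 ≤ p) (hp' : p ≠ ∞) (hδ : 0 < δ)
    (hw : AEStronglyMeasurable w μ) (hδw : ∀ᵐ x ∂μ, δ ≤ w x) (hw₁ : ∀ᵐ x ∂μ, |w x| ≤ 1)
    (hr : 0 < r) (hf : AEStronglyMeasurable f μ) (hρ₀ : 0 ≤ ρ) (hρ₁ : ρ < 1)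
    (hsize : ∀ k, eLpNorm f p (μ.restrict (dyadicAnnulus x₀ r k)) ≤
      μ (dyadicBall x₀ r k) ^ (1 / p.toReal - 1) * ENNReal.ofReal (ρ ^ k)) (k : ℕ) :
    eLpNorm (moleculePiece μ w x₀ r f k) p μ ≤
      ENNReal.ofReal (moleculeConstant (finrank ℝ E) δ ρ * ρ ^ k) *
        μ (dyadicBall x₀ r (k + 1)) ^ (1 / p.toReal - 1) := by
  set s := 1 / p.toReal - 1
  set c := ENNReal.ofReal (2 ^ finrank ℝ E)
  set V := μ (dyadicBall x₀ r (k + 1)) ^ s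
  set a := ρ ^ k / (1 - ρ)
  have hs : -1 ≤ s := by
    have : 0 ≤ 1 / p.toReal := by positivity
    linarith
  have hVk : μ (dyadicBall x₀ r k) ^ s ≤ c * V := rpow_measure_dyadicBall_le_succ μ hr hs k
  have hVk₁ : μ (dyadicBall x₀ r (k + 1)) ^ s ≤ c * V := le_mul_of_one_le_left' <| by
    rw [← ENNReal.ofReal_one]
    exact ENNReal.ofReal_le_ofReal (one_le_pow₀ one_le_two)
  have hg : ∀ j, eLpNorm (normalizedIndicator μ w (dyadicBall x₀ r j)) p μ ≤
      ENNReal.ofReal δ⁻¹ * μ (dyadicBall x₀ r j) ^ s := fun j =>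
    eLpNorm_normalizedIndicator_le (measure_ball_pos μ x₀ (by positivity)).ne'
      measure_ball_lt_top.ne hδ hδw
      (integrableOn_of_abs_le_one measure_ball_lt_top.ne hw hw₁)
      measurableSet_ball (by positivity) hp'
  have hM : ∀ j, k ≤ j → ‖tailSum (annulusMass μ w x₀ r f) j‖ₑ ≤ ENNReal.ofReal a := by
    intro j hj
    rw [← ofReal_norm]
    refine ENNReal.ofReal_le_ofReal ((norm_tailSum_le_geometric hρ₀ hρ₁
      (norm_annulusMass_le hp hf hr hw₁ hρ₀ hsize) j).trans ?_)
    exact div_le_div_of_nonneg_right (pow_le_pow_of_le_one hρ₀ hρ₁.le hj) (by linarith)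
  calc eLpNorm (moleculePiece μ w x₀ r f k) p μ
      ≤ eLpNorm f p (μ.restrict (dyadicAnnulus x₀ r k)) +
          (‖tailSum (annulusMass μ w x₀ r f) (k + 1)‖ₑ *
              eLpNorm (normalizedIndicator μ w (dyadicBall x₀ r (k + 1))) p μ +
            ‖tailSum (annulusMass μ w x₀ r f) k‖ₑ *
              eLpNorm (normalizedIndicator μ w (dyadicBall x₀ r k)) p μ) :=
        eLpNorm_telescopingPiece_le hp (measurableSet_dyadicAnnulus k) hf
          fun j => (measurable_const.indicator measurableSet_ball).aestronglyMeasurable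
    _ ≤ c * V * ENNReal.ofReal (ρ ^ k) + (ENNReal.ofReal a * (ENNReal.ofReal δ⁻¹ * (c * V)) +
          ENNReal.ofReal a * (ENNReal.ofReal δ⁻¹ * (c * V))) := by
        gcongr
        · exact (hsize k).trans (by gcongr)
        · exact hM _ k.le_succ
        · exact (hg _).trans (by gcongr)
        · exact hM _ le_rfl
        · exact (hg _).trans (by gcongr)
    _ = ENNReal.ofReal (moleculeConstant (finrank ℝ E) δ ρ * ρ ^ k) * V := by
        rw [ofReal_moleculeConstant_mul_pow hδ hρ₀ hρ₁]
        ring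

theorem exists_isHardyAtom_decomposition (hp : 1 ≤ p) (hp' : p ≠ ∞) (hδ : 0 < δ)
    (hw : AEStronglyMeasurable w μ) (hwb : ∀ᵐ x ∂μ, δ ≤ w x ∧ w x ≤ 1) (hr : 0 < r)
    (hf : AEStronglyMeasurable f μ) (hρ₀ : 0 < ρ) (hρ₁ : ρ < 1)
    (hsize : ∀ k, eLpNorm f p (μ.restrict (dyadicAnnulus x₀ r k)) ≤
      μ (dyadicBall x₀ r k) ^ (1 / p.toReal - 1) * ENNReal.ofReal (ρ ^ k))
    (hcancel : ∫ x, f x * w x ∂μ = 0) :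
    ∃ (Λ : ℕ → ℂ) (a : ℕ → E → ℂ), (∀ n, IsHardyAtom μ w p (a n)) ∧
      HasSum (fun n => ‖Λ n‖) (moleculeConstant (finrank ℝ E) δ ρ / (1 - ρ)) ∧
      Tendsto (fun N => ∫ x, ‖f x - ∑ n ∈ Finset.range N, Λ n * a n x‖ ∂μ) atTop (𝓝 0) := by
  set K := moleculeConstant (finrank ℝ E) δ ρ
  have hK : 0 < K := moleculeConstant_pos _ hδ hρ₁
  have hδw : ∀ᵐ x ∂μ, δ ≤ w x := hwb.mono fun x hx => hx.1
  have hw₁ : ∀ᵐ x ∂μ, |w x| ≤ 1 := hwb.mono fun x hx => abs_le.2 ⟨by linarith [hx.1], hx.2⟩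
  have hfi : Integrable f μ := integrable_of_eLpNorm_dyadicAnnulus_le hp hf hr hρ₀.le hρ₁ hsize
  have hΛ : ∀ n x, ((K * ρ ^ n : ℝ) : ℂ) *
      ((((K * ρ ^ n)⁻¹ : ℝ) : ℂ) • moleculePiece μ w x₀ r f n) x =
        moleculePiece μ w x₀ r f n x := fun n x => by
    rw [Pi.smul_apply, ← smul_eq_mul, smul_smul, ← Complex.ofReal_mul,
      mul_inv_cancel₀ (by positivity), Complex.ofReal_one, one_smul]
  refine ⟨fun n => ((K * ρ ^ n : ℝ) : ℂ),
    fun n => (((K * ρ ^ n)⁻¹ : ℝ) : ℂ) • moleculePiece μ w x₀ r f n, fun n => ?_, ?_, ?_⟩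
  · exact isHardyAtom_inv_smul (by positivity) (by positivity)
      (support_moleculePiece_subset hr.le n)
      (eLpNorm_moleculePiece_le hp hp' hδ hw hδw hw₁ hr hf hρ₀.le hρ₁ hsize n)
      (integral_moleculePiece_mul_eq_zero hδ hw hδw hw₁ hr hfi n)
  · simp_rw [Complex.norm_real, Real.norm_of_nonneg (by positivity : 0 ≤ K * ρ ^ _)]
    rw [div_eq_mul_inv]
    exact (hasSum_geometric_of_lt_one hρ₀.le hρ₁).mul_left K
  · simp_rw [hΛ]
    exact tendsto_integral_norm_sub_sum_moleculePiece hδ hw hδw hw₁ hr hfi hcancel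

end Decomposition

section MoleculeCondition

variable {X : Type*} [PseudoMetricSpace X] [MeasurableSpace X] {μ : Measure X} {x₀ : X} {r : ℝ}
  {f : X → ℂ}

lemma eLpNorm_restrict_dyadicAnnulus_le {q ε : ℝ} (hq : 0 < q) (hr : 0 ≤ r)
    (hball : (∫⁻ x in ball x₀ r, ENNReal.ofReal ‖f x‖ ^ q ∂μ) ^ (1 / q) ≤
      μ (ball x₀ r) ^ (1 / q - 1))
    (hann : ∀ k : ℕ, 1 ≤ k →
      (∫⁻ x in ball x₀ (2 ^ k * r) \ ball x₀ (2 ^ (k - 1) * r), ENNReal.ofReal ‖f x‖ ^ q ∂μ) ^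
          (1 / q) ≤ μ (ball x₀ (2 ^ k * r)) ^ (1 / q - 1) * ENNReal.ofReal ((2 : ℝ) ^ (-ε * k)))
    (k : ℕ) :
    eLpNorm f (ENNReal.ofReal q) (μ.restrict (dyadicAnnulus x₀ r k)) ≤
      μ (dyadicBall x₀ r k) ^ (1 / (ENNReal.ofReal q).toReal - 1) *
        ENNReal.ofReal (((2 : ℝ) ^ (-ε)) ^ k) := by
  rw [toReal_ofReal hq.le, eLpNorm_ofReal_eq hq]
  rcases k with _ | k
  · simpa [dyadicAnnulus_zero, dyadicBall] using hball
  · rw [dyadicAnnulus_succ hr, ← Real.rpow_natCast, ← Real.rpow_mul zero_le_two]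
    simpa [dyadicBall] using hann (k + 1) le_add_self

end MoleculeCondition

theorem stmt_8_general (d : ℕ) (q ε δ₀ : ℝ) (hq : 1 < q) (hε : 0 < ε)
    (hδ₀ : 0 < δ₀) :
    ∃ C > 0, ∀ w : EuclideanSpace ℝ (Fin d) → ℝ, Measurable w →
      (∀ᵐ x : EuclideanSpace ℝ (Fin d), δ₀ ≤ w x ∧ w x ≤ 1) →
      ∀ (x₀ : EuclideanSpace ℝ (Fin d)) (r : ℝ), 0 < r →
      ∀ b : EuclideanSpace ℝ (Fin d) → ℂ, Measurable b →
      -- size estimate on the ball B(x₀, r)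
      (∫⁻ x in Metric.ball x₀ r, ENNReal.ofReal ‖b x‖ ^ q) ^ (1 / q) ≤
        volume (Metric.ball x₀ r) ^ (1 / q - 1) →
      -- size estimates on the annuli 2ᵏB ∖ 2ᵏ⁻¹B
      (∀ k : ℕ, 1 ≤ k →
        (∫⁻ x in Metric.ball x₀ (2 ^ k * r) \ Metric.ball x₀ (2 ^ (k - 1) * r),
            ENNReal.ofReal ‖b x‖ ^ q) ^ (1 / q) ≤
          volume (Metric.ball x₀ (2 ^ k * r)) ^ (1 / q - 1) *
            ENNReal.ofReal ((2 : ℝ) ^ (-ε * k))) →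
      -- cancellation against the weight w
      (∫ x, b x * (w x : ℂ)) = 0 →
      ∃ (Λ : ℕ → ℂ) (a : ℕ → EuclideanSpace ℝ (Fin d) → ℂ),
        -- each aₙ is a (1,q,w)-atom
        (∀ n : ℕ, ∃ (y : EuclideanSpace ℝ (Fin d)) (ρ : ℝ), 0 < ρ ∧
          Function.support (a n) ⊆ Metric.ball y ρ ∧
          (∫⁻ x, ENNReal.ofReal ‖a n x‖ ^ q) ^ (1 / q) ≤
            volume (Metric.ball y ρ) ^ (1 / q - 1) ∧
          (∫ x, a n x * (w x : ℂ)) = 0) ∧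
        -- ∑ |λₙ| ≤ C
        Summable (fun n => ‖Λ n‖) ∧ (∑' n, ‖Λ n‖) ≤ C ∧
        -- b = ∑ λₙ aₙ with convergence in L¹
        Filter.Tendsto
          (fun N : ℕ => ∫ x, ‖b x - ∑ n ∈ Finset.range N, Λ n * a n x‖)
          Filter.atTop (nhds 0) := by
  have hq₀ : 0 < q := by linarith
  have hρ₀ : 0 < (2 : ℝ) ^ (-ε) := by positivity
  have hρ₁ : (2 : ℝ) ^ (-ε) < 1 := Real.rpow_lt_one_of_one_lt_of_neg one_lt_two (by linarith)
  refine ⟨moleculeConstant d δ₀ (2 ^ (-ε)) / (1 - 2 ^ (-ε)),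
    div_pos (moleculeConstant_pos d hδ₀ hρ₁) (by linarith), ?_⟩
  intro w hw hwb x₀ r hr b hb hball hann hcancel
  obtain ⟨Λ, a, ha, hΛ, hconv⟩ := exists_isHardyAtom_decomposition
    (ENNReal.one_le_ofReal.2 hq.le) ofReal_ne_top hδ₀ hw.aestronglyMeasurable hwb hr
    hb.aestronglyMeasurable hρ₀ hρ₁
    (eLpNorm_restrict_dyadicAnnulus_le hq₀ hr.le hball hann) hcancel
  rw [finrank_euclideanSpace_fin] at hΛ
  refine ⟨Λ, a, fun n => ?_, hΛ.summable, hΛ.tsum_eq.le, hconv⟩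
  obtain ⟨y, t, ht, hsupp, hLp, hzero⟩ := ha n
  rw [toReal_ofReal hq₀.le, eLpNorm_ofReal_eq hq₀] at hLp
  exact ⟨y, t, ht, hsupp, hLp, hzero⟩

/-- Every `(1,q,ε,w)`-molecule decomposes as `b = Σ λₙ aₙ` (convergence in `L¹`)
into `(1,q,w)`-atoms `aₙ` with `Σ |λₙ| ≤ C`, where `C` depends only on `d, q, ε, δ₀`. -/
theorem stmt_8 (d : ℕ) (hd : 3 ≤ d) (q ε δ₀ : ℝ) (hq : 1 < q) (hε : 0 < ε)
    (hδ₀ : 0 < δ₀) (hδ₀1 : δ₀ ≤ 1) :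
    ∃ C > 0, ∀ w : EuclideanSpace ℝ (Fin d) → ℝ, Measurable w →
      (∀ᵐ x : EuclideanSpace ℝ (Fin d), δ₀ ≤ w x ∧ w x ≤ 1) →
      ∀ (x₀ : EuclideanSpace ℝ (Fin d)) (r : ℝ), 0 < r →
      ∀ b : EuclideanSpace ℝ (Fin d) → ℂ, Measurable b →
      -- size estimate on the ball B(x₀, r)
      (∫⁻ x in Metric.ball x₀ r, ENNReal.ofReal ‖b x‖ ^ q) ^ (1 / q) ≤
        volume (Metric.ball x₀ r) ^ (1 / q - 1) →
      -- size estimates on the annuli 2ᵏB ∖ 2ᵏ⁻¹B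
      (∀ k : ℕ, 1 ≤ k →
        (∫⁻ x in Metric.ball x₀ (2 ^ k * r) \ Metric.ball x₀ (2 ^ (k - 1) * r),
            ENNReal.ofReal ‖b x‖ ^ q) ^ (1 / q) ≤
          volume (Metric.ball x₀ (2 ^ k * r)) ^ (1 / q - 1) *
            ENNReal.ofReal ((2 : ℝ) ^ (-ε * k))) →
      -- cancellation against the weight w
      (∫ x, b x * (w x : ℂ)) = 0 →
      ∃ (Λ : ℕ → ℂ) (a : ℕ → EuclideanSpace ℝ (Fin d) → ℂ),
        -- each aₙ is a (1,q,w)-atom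
        (∀ n : ℕ, ∃ (y : EuclideanSpace ℝ (Fin d)) (ρ : ℝ), 0 < ρ ∧
          Function.support (a n) ⊆ Metric.ball y ρ ∧
          (∫⁻ x, ENNReal.ofReal ‖a n x‖ ^ q) ^ (1 / q) ≤
            volume (Metric.ball y ρ) ^ (1 / q - 1) ∧
          (∫ x, a n x * (w x : ℂ)) = 0) ∧
        -- ∑ |λₙ| ≤ C
        Summable (fun n => ‖Λ n‖) ∧ (∑' n, ‖Λ n‖) ≤ C ∧
        -- b = ∑ λₙ aₙ with convergence in L¹
        Filter.Tendsto
          (fun N : ℕ => ∫ x, ‖b x - ∑ n ∈ Finset.range N, Λ n * a n x‖)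
          Filter.atTop (nhds 0) :=
  stmt_8_general d q ε δ₀ hq hε hδ₀
end

section
/- Let d ≥ 3 and let P_s(x) = (4πs)^{−d/2} e^{−|x|²/(4s)} denote the Gauss–Weierstrass kernel on ℝ^d. Then for every N > 0 there is a constant C_N > 0 such that for all t > 0 and all x ∈ ℝ^d with x ≠ 0, ∫_0^t P_s(x) s^{−1/2} ds ≤ C_N |x|^{1−d} (1 + |x|/√t)^{−N}. -/
/-!
For `s ≤ t` split `e^{-r²/4s} = e^{-r²/8s} e^{-r²/8s} ≤ e^{-r²/8t} e^{-r²/8s}`. What remains,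
`∫₀^∞ s^{-(d+1)/2} e^{-r²/8s} ds`, becomes a Gamma integral under `s ↦ 1/s` and equals
`Γ((d-1)/2) (r²/8)^{(1-d)/2}`, which is a constant times `r^{1-d}`; the Gaussian factor
`e^{-r²/8t} = e^{-(r/√t)²/8}` is dominated by every power `(1 + r/√t)^{-N}`.
-/

open MeasureTheory Real ENNReal Set

lemma rpow_neg_mul_exp_neg_div_comp_inv {a c x : ℝ} (hx : 0 < x) :
    x ^ (-1 - 1 : ℝ) * ((x ^ (-1 : ℝ)) ^ (-a) * exp (-(c / x ^ (-1 : ℝ)))) =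
      x ^ (a - 2) * exp (-c * x ^ (1 : ℝ)) := by
  rw [Real.rpow_neg_one, Real.rpow_one, Real.inv_rpow hx.le, Real.rpow_neg hx.le, inv_inv,
    show a - 2 = (-1 - 1) + a by ring, Real.rpow_add hx, div_inv_eq_mul, neg_mul, mul_assoc]

theorem integrableOn_rpow_neg_mul_exp_neg_div {a c : ℝ} (ha : 1 < a) (hc : 0 < c) :
    IntegrableOn (fun s : ℝ => s ^ (-a) * exp (-(c / s))) (Ioi 0) := by
  rw [← integrableOn_Ioi_comp_rpow_iff' _ (by norm_num : (-1 : ℝ) ≠ 0)]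
  refine (integrableOn_rpow_mul_exp_neg_mul_rpow (s := a - 2) (by linarith) one_pos hc).congr_fun
    (fun x hx => ?_) measurableSet_Ioi
  exact (rpow_neg_mul_exp_neg_div_comp_inv hx).symm

theorem integral_rpow_neg_mul_exp_neg_div {a c : ℝ} (ha : 1 < a) (hc : 0 < c) :
    ∫ s in Ioi 0, s ^ (-a) * exp (-(c / s)) = c ^ (1 - a) * Gamma (a - 1) := by
  rw [← integral_comp_rpow_Ioi _ (by norm_num : (-1 : ℝ) ≠ 0)]
  calc _ = ∫ x in Ioi (0 : ℝ), x ^ (a - 2) * exp (-c * x ^ (1 : ℝ)) := by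
        refine setIntegral_congr_fun measurableSet_Ioi (fun x hx => ?_)
        rw [smul_eq_mul, abs_neg, abs_one, one_mul]
        exact rpow_neg_mul_exp_neg_div_comp_inv hx
    _ = _ := by
        rw [integral_rpow_mul_exp_neg_mul_rpow one_pos (by linarith) hc]
        ring_nf

theorem lintegral_rpow_neg_mul_exp_neg_div {a c : ℝ} (ha : 1 < a) (hc : 0 < c) :
    ∫⁻ s in Ioi 0, ENNReal.ofReal (s ^ (-a) * exp (-(c / s))) =
      ENNReal.ofReal (c ^ (1 - a) * Gamma (a - 1)) := by
  rw [← integral_rpow_neg_mul_exp_neg_div ha hc, ofReal_integral_eq_lintegral_ofReal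
    (integrableOn_rpow_neg_mul_exp_neg_div ha hc)]
  filter_upwards [ae_restrict_mem measurableSet_Ioi] with s (hs : 0 < s)
  positivity

lemma exp_neg_div_le_mul_exp_neg_div {b s t : ℝ} (hb : 0 ≤ b) (hs : 0 < s) (hst : s ≤ t) :
    exp (-b / (4 * s)) ≤ exp (-(b / (8 * t))) * exp (-(b / 8 / s)) := by
  rw [← Real.exp_add, Real.exp_le_exp]
  have : b / (8 * t) ≤ b / 8 / s := by
    rw [div_div]; gcongr
  linarith [show -b / (4 * s) = -(b / 8 / s) - b / 8 / s by ring]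

lemma heatKernel_mul_rpow_le {d b s t : ℝ} (hb : 0 ≤ b) (hs : 0 < s) (hst : s ≤ t) :
    (4 * π * s) ^ (-d / 2) * exp (-b / (4 * s)) * s ^ (-(1 : ℝ) / 2) ≤
      (4 * π) ^ (-d / 2) * exp (-(b / (8 * t))) * (s ^ (-((d + 1) / 2)) * exp (-(b / 8 / s))) := by
  have hpow : (4 * π * s) ^ (-d / 2) * s ^ (-(1 : ℝ) / 2) =
      (4 * π) ^ (-d / 2) * s ^ (-((d + 1) / 2)) := by
    rw [Real.mul_rpow (by positivity) hs.le, mul_assoc, ← Real.rpow_add hs]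
    ring_nf
  calc _ = (4 * π) ^ (-d / 2) * s ^ (-((d + 1) / 2)) * exp (-b / (4 * s)) := by
        rw [← hpow]; ring
    _ ≤ (4 * π) ^ (-d / 2) * s ^ (-((d + 1) / 2)) *
          (exp (-(b / (8 * t))) * exp (-(b / 8 / s))) := by
        gcongr; exact exp_neg_div_le_mul_exp_neg_div hb hs hst
    _ = _ := by ring

theorem lintegral_heatKernel_mul_rpow_le {d b t : ℝ} (hd : 1 < d) (hb : 0 < b) :
    ∫⁻ s in Ioc 0 t,
        ENNReal.ofReal ((4 * π * s) ^ (-d / 2) * exp (-b / (4 * s)) * s ^ (-(1 : ℝ) / 2)) ≤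
      ENNReal.ofReal ((4 * π) ^ (-d / 2) * exp (-(b / (8 * t))) *
        ((b / 8) ^ (1 - (d + 1) / 2) * Gamma ((d + 1) / 2 - 1))) := by
  have hK : 0 < (4 * π) ^ (-d / 2) * exp (-(b / (8 * t))) := by positivity
  calc _ ≤ ∫⁻ s in Ioc 0 t, ENNReal.ofReal ((4 * π) ^ (-d / 2) * exp (-(b / (8 * t)))) *
          ENNReal.ofReal (s ^ (-((d + 1) / 2)) * exp (-(b / 8 / s))) := by
        refine setLIntegral_mono' measurableSet_Ioc fun s hs => ?_
        rw [← ENNReal.ofReal_mul hK.le]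
        exact ENNReal.ofReal_le_ofReal (heatKernel_mul_rpow_le hb.le hs.1 hs.2)
    _ ≤ ENNReal.ofReal ((4 * π) ^ (-d / 2) * exp (-(b / (8 * t)))) *
          ∫⁻ s in Ioi 0, ENNReal.ofReal (s ^ (-((d + 1) / 2)) * exp (-(b / 8 / s))) := by
        rw [lintegral_const_mul' _ _ ENNReal.ofReal_ne_top]
        gcongr
        exact Ioc_subset_Ioi_self
    _ = _ := by
        rw [lintegral_rpow_neg_mul_exp_neg_div (by linarith) (by positivity),
          ENNReal.ofReal_mul hK.le]

lemma exp_neg_sq_div_eight_le (N : ℝ) {a : ℝ} (ha : 0 ≤ a) :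
    exp (-(a ^ 2 / 8)) ≤ exp (2 * N ^ 2) * (1 + a) ^ (-N) := by
  have hlog : 0 ≤ Real.log (1 + a) := Real.log_nonneg (by linarith)
  have hlog' : Real.log (1 + a) ≤ a := by
    linarith [Real.log_le_sub_one_of_pos (by linarith : 0 < 1 + a)]
  rw [Real.rpow_def_of_pos (by linarith), ← Real.exp_add, Real.exp_le_exp]
  have hNlog : N * Real.log (1 + a) ≤ |N| * a := by
    calc N * Real.log (1 + a) ≤ |N| * Real.log (1 + a) := by gcongr; exact le_abs_self N
      _ ≤ |N| * a := by gcongr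
  nlinarith [sq_nonneg (a - 4 * |N|), sq_abs N]

lemma rpow_sq_div_eight {r d : ℝ} (hr : 0 ≤ r) :
    (r ^ 2 / 8) ^ (1 - (d + 1) / 2) = 8 ^ ((d - 1) / 2) * r ^ (1 - d) := by
  rw [Real.div_rpow (by positivity) (by norm_num), ← Real.rpow_natCast r 2, ← Real.rpow_mul hr,
    div_eq_mul_inv, ← Real.rpow_neg (by norm_num), mul_comm]
  ring_nf

theorem stmt_11_general (d : ℕ) (hd : 3 ≤ d) (N : ℝ) :
    ∃ C > 0, ∀ t : ℝ, 0 < t → ∀ x : EuclideanSpace ℝ (Fin d), x ≠ 0 →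
      ∫⁻ s in Set.Ioc (0 : ℝ) t,
          ENNReal.ofReal
            ((4 * π * s) ^ (-(d : ℝ) / 2) * Real.exp (-‖x‖ ^ 2 / (4 * s)) *
              s ^ (-(1 : ℝ) / 2)) ≤
        ENNReal.ofReal (C * ‖x‖ ^ ((1 : ℝ) - d) * (1 + ‖x‖ / Real.sqrt t) ^ (-N)) := by
  have hd' : (1 : ℝ) < d := by exact_mod_cast (by omega : 1 < d)
  have hΓ : 0 < Gamma ((d + 1) / 2 - 1) := Real.Gamma_pos_of_pos (by linarith)
  refine ⟨(4 * π) ^ (-(d : ℝ) / 2) * 8 ^ (((d : ℝ) - 1) / 2) * Gamma ((d + 1) / 2 - 1) *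
    exp (2 * N ^ 2), by positivity, fun t ht x hx => ?_⟩
  have hr : 0 < ‖x‖ := norm_pos_iff.mpr hx
  refine (lintegral_heatKernel_mul_rpow_le hd' (by positivity)).trans
    (ENNReal.ofReal_le_ofReal ?_)
  have hgauss := exp_neg_sq_div_eight_le N (by positivity : 0 ≤ ‖x‖ / sqrt t)
  rw [div_pow, Real.sq_sqrt ht.le, div_div, mul_comm t 8] at hgauss
  rw [rpow_sq_div_eight hr.le]
  calc _ = (4 * π) ^ (-(d : ℝ) / 2) * 8 ^ (((d : ℝ) - 1) / 2) * Gamma ((d + 1) / 2 - 1) *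
        ‖x‖ ^ (1 - (d : ℝ)) * exp (-(‖x‖ ^ 2 / (8 * t))) := by ring
    _ ≤ (4 * π) ^ (-(d : ℝ) / 2) * 8 ^ (((d : ℝ) - 1) / 2) * Gamma ((d + 1) / 2 - 1) *
        ‖x‖ ^ (1 - (d : ℝ)) * (exp (2 * N ^ 2) * (1 + ‖x‖ / sqrt t) ^ (-N)) := by gcongr
    _ = _ := by ring

/-- For `d ≥ 3` and every `N > 0` there is `C_N > 0` such that for all
`t > 0` and `x ≠ 0`,
`∫_0^t (4πs)^{-d/2} e^{-|x|²/(4s)} s^{-1/2} ds ≤ C_N |x|^{1-d} (1+|x|/√t)^{-N}`. -/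
theorem stmt_11 (d : ℕ) (hd : 3 ≤ d) (N : ℝ) (hN : 0 < N) :
    ∃ C > 0, ∀ t : ℝ, 0 < t → ∀ x : EuclideanSpace ℝ (Fin d), x ≠ 0 →
      ∫⁻ s in Set.Ioc (0 : ℝ) t,
          ENNReal.ofReal
            ((4 * π * s) ^ (-(d : ℝ) / 2) * Real.exp (-‖x‖ ^ 2 / (4 * s)) *
              s ^ (-(1 : ℝ) / 2)) ≤
        ENNReal.ofReal (C * ‖x‖ ^ ((1 : ℝ) - d) * (1 + ‖x‖ / Real.sqrt t) ^ (-N)) :=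
  stmt_11_general d hd N
end

section
/- Let d ≥ 3, let 1 < q < d/(d−1), let 0 < γ ≤ 2 and let N > d + γ. Then there is a constant C > 0 such that the following holds: for every measurable V : ℝ^d → [0,∞) and A ≥ 0 with ∫_{ℝ^d} V(z) |x−z|^{2−d} dz ≤ A for all x ∈ ℝ^d, and for every r > 0 and y₀ ∈ ℝ^d, ( ∫_{ℝ^d} ( r^{1−d} ∫_{ℝ^d} |x−z|^{1−d} (1 + |x−z|/r)^{−N+γ} V(z) (1 + |z−y₀|/r)^{−d+γ} dz )^q dx )^{1/q} ≤ C A r^{−d+d/q}. -/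
/-!
Write `J(x) = r^{1-d} ∫ K(x - z) W(z) dz` with `K(u) = |u|^{1-d} (1 + |u|/r)^{-N+γ}` and
`W(z) = V(z) (1 + |z - y₀|/r)^{-d+γ}`. Young's inequality `‖K * W‖_q ≤ ‖K‖_q ‖W‖_1` (here via
Hölder and Tonelli) splits the estimate. Scaling `u = r v` gives `‖K‖_q^q = c r^{d + (1-d)q}`,
where `c = ∫ |v|^{(1-d)q} (1 + |v|)^{-(N-γ)q} dv` is finite because `(1-d)q > -d` (this is
`q < d/(d-1)`) and `(N-γ)q > d`. Since `γ ≤ 2`, `(1 + t/r)^{-d+γ} ≤ r^{d-2} t^{2-d}`, so the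
hypothesis on `V` at `x = y₀` gives `‖W‖_1 ≤ r^{d-2} A`. The powers of `r` add up to `-d + d/q`.
-/

open MeasureTheory ENNReal Set Metric Module

theorem Real.one_add_div_rpow_le {t r e f : ℝ} (ht : 0 < t) (hr : 0 < r) (hef : e ≤ f)
    (hf : f ≤ 0) : (1 + t / r) ^ e ≤ r ^ (-f) * t ^ f := calc
  (1 + t / r) ^ e ≤ (1 + t / r) ^ f :=
    Real.rpow_le_rpow_of_exponent_le (by linarith [div_pos ht hr]) hef
  _ ≤ (t / r) ^ f := Real.rpow_le_rpow_of_nonpos (div_pos ht hr) (by linarith) hf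
  _ = r ^ (-f) * t ^ f := by
    rw [Real.div_rpow ht.le hr.le, Real.rpow_neg hr.le, div_eq_inv_mul]

theorem lintegral_mul_one_add_norm_div_rpow_le {E : Type*} [NormedAddCommGroup E]
    [MeasurableSpace E] {μ : Measure E} [NullSingletonClass μ] {V : E → ℝ} (hV : ∀ z, 0 ≤ V z)
    (y₀ : E) {r e f : ℝ} (hr : 0 < r) (hef : e ≤ f) (hf : f ≤ 0) :
    ∫⁻ z, ENNReal.ofReal (V z * (1 + ‖z - y₀‖ / r) ^ e) ∂μ ≤
      ENNReal.ofReal (r ^ (-f)) * ∫⁻ z, ENNReal.ofReal (V z * ‖y₀ - z‖ ^ f) ∂μ := by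
  rw [← lintegral_const_mul' _ _ ofReal_ne_top]
  refine lintegral_mono_ae ?_
  filter_upwards [compl_mem_ae_iff.mpr (measure_singleton y₀)] with z hz
  have hz : 0 < ‖z - y₀‖ := norm_pos_iff.mpr (sub_ne_zero.mpr hz)
  rw [← ofReal_mul (by positivity), mul_left_comm, norm_sub_rev y₀]
  exact ofReal_le_ofReal (mul_le_mul_of_nonneg_left (Real.one_add_div_rpow_le hz hr hef hf) (hV z))

section Convolution

variable {α : Type*} [MeasurableSpace α] {μ : Measure α}

theorem ENNReal.lintegral_mul_rpow_le {f w : α → ℝ≥0∞} (hf : AEMeasurable f μ)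
    (hw : AEMeasurable w μ) {q : ℝ} (hq : 1 ≤ q) :
    (∫⁻ a, f a * w a ∂μ) ^ q ≤ (∫⁻ a, f a ^ q * w a ∂μ) * (∫⁻ a, w a ∂μ) ^ (q - 1) := by
  have hq0 : 0 < q := by linarith
  have hq' : 0 ≤ 1 - 1 / q := sub_nonneg.mpr ((div_le_one hq0).mpr hq)
  have hholder := ENNReal.lintegral_mul_norm_pow_le ((hf.pow_const q).mul hw) hw
    (p := 1 / q) (q := 1 - 1 / q) (by positivity) hq' (by ring)
  have hsplit : ∀ a, (f a ^ q * w a) ^ (1 / q) * w a ^ (1 - 1 / q) = f a * w a := fun a => by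
    rw [ENNReal.mul_rpow_of_nonneg _ _ (by positivity), ← ENNReal.rpow_mul,
      mul_one_div_cancel hq0.ne', ENNReal.rpow_one, mul_assoc,
      ← ENNReal.rpow_add_of_nonneg _ _ (by positivity) hq', add_sub_cancel, ENNReal.rpow_one]
  simp only [Pi.mul_apply, hsplit] at hholder
  calc (∫⁻ a, f a * w a ∂μ) ^ q
      ≤ ((∫⁻ a, f a ^ q * w a ∂μ) ^ (1 / q) * (∫⁻ a, w a ∂μ) ^ (1 - 1 / q)) ^ q :=
        ENNReal.rpow_le_rpow hholder hq0.le
    _ = (∫⁻ a, f a ^ q * w a ∂μ) * (∫⁻ a, w a ∂μ) ^ (q - 1) := by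
      rw [ENNReal.mul_rpow_of_nonneg _ _ hq0.le, ← ENNReal.rpow_mul, ← ENNReal.rpow_mul,
        one_div_mul_cancel hq0.ne', ENNReal.rpow_one, sub_mul, one_mul,
        one_div_mul_cancel hq0.ne']

theorem ENNReal.lintegral_const_mul_rpow_rpow_one_div {c : ℝ≥0∞} (hc : c ≠ ∞) (F : α → ℝ≥0∞)
    {q : ℝ} (hq : 0 < q) :
    (∫⁻ x, (c * F x) ^ q ∂μ) ^ (1 / q) = c * (∫⁻ x, F x ^ q ∂μ) ^ (1 / q) := by
  simp_rw [ENNReal.mul_rpow_of_nonneg _ _ hq.le]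
  rw [lintegral_const_mul' _ _ (ENNReal.rpow_ne_top_of_nonneg hq.le hc),
    ENNReal.mul_rpow_of_nonneg _ _ (by positivity), ← ENNReal.rpow_mul,
    mul_one_div_cancel hq.ne', ENNReal.rpow_one]

theorem lintegral_convolution_rpow_le {G : Type*} [AddGroup G] [MeasurableSpace G]
    [MeasurableAdd₂ G] [MeasurableNeg G] {μ : Measure G} [SFinite μ] [μ.IsAddRightInvariant]
    {K W : G → ℝ≥0∞} (hK : Measurable K) (hW : Measurable W) {q : ℝ} (hq : 1 ≤ q) :
    (∫⁻ x, (∫⁻ z, K (x - z) * W z ∂μ) ^ q ∂μ) ^ (1 / q) ≤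
      (∫⁻ u, K u ^ q ∂μ) ^ (1 / q) * ∫⁻ z, W z ∂μ := by
  have hq0 : 0 < q := by linarith
  have hKW : Measurable fun p : G × G => K (p.1 - p.2) ^ q * W p.2 := by fun_prop
  have htonelli : ∫⁻ x, ∫⁻ z, K (x - z) ^ q * W z ∂μ ∂μ =
      (∫⁻ u, K u ^ q ∂μ) * ∫⁻ z, W z ∂μ := by
    rw [lintegral_lintegral_swap hKW.aemeasurable, ← lintegral_const_mul _ hW]
    refine lintegral_congr fun z => ?_
    rw [lintegral_mul_const _ (by fun_prop), lintegral_sub_right_eq_self (fun u => K u ^ q) z]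
  have hpow : ∫⁻ x, (∫⁻ z, K (x - z) * W z ∂μ) ^ q ∂μ ≤
      (∫⁻ u, K u ^ q ∂μ) * (∫⁻ z, W z ∂μ) ^ q := calc
    _ ≤ ∫⁻ x, (∫⁻ z, K (x - z) ^ q * W z ∂μ) * (∫⁻ z, W z ∂μ) ^ (q - 1) ∂μ :=
      lintegral_mono fun x => ENNReal.lintegral_mul_rpow_le (by fun_prop) hW.aemeasurable hq
    _ = (∫⁻ u, K u ^ q ∂μ) * (∫⁻ z, W z ∂μ) ^ q := by
      rw [lintegral_mul_const _ hKW.lintegral_prod_right', htonelli, mul_assoc]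
      nth_rewrite 1 [← ENNReal.rpow_one (∫⁻ z, W z ∂μ)]
      rw [← ENNReal.rpow_add_of_nonneg _ _ zero_le_one (sub_nonneg.mpr hq), add_sub_cancel]
  calc _ ≤ ((∫⁻ u, K u ^ q ∂μ) * (∫⁻ z, W z ∂μ) ^ q) ^ (1 / q) :=
        ENNReal.rpow_le_rpow hpow (by positivity)
    _ = _ := by
      rw [ENNReal.mul_rpow_of_nonneg _ _ (by positivity), ← ENNReal.rpow_mul,
        mul_one_div_cancel hq0.ne', ENNReal.rpow_one]

end Convolution

section Kernel

variable {E : Type*} [NormedAddCommGroup E] [NormedSpace ℝ E] [FiniteDimensional ℝ E]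
  [MeasurableSpace E] [BorelSpace E] (μ : Measure E) [μ.IsAddHaarMeasure]

theorem MeasureTheory.Measure.lintegral_comp_smul (f : E → ℝ≥0∞) {r : ℝ} (hr : r ≠ 0) :
    ∫⁻ x, f (r • x) ∂μ = ENNReal.ofReal |(r ^ finrank ℝ E)⁻¹| * ∫⁻ x, f x ∂μ := by
  calc ∫⁻ x, f (r • x) ∂μ = ∫⁻ x, f x ∂μ.map (MeasurableEquiv.smul₀ r hr) :=
        (lintegral_map_equiv f (MeasurableEquiv.smul₀ r hr)).symm
    _ = _ := by
      rw [show ⇑(MeasurableEquiv.smul₀ r hr) = (r • ·) from rfl, Measure.map_addHaar_smul μ hr,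
        lintegral_smul_measure, smul_eq_mul]

theorem lintegral_rpow_norm_mul_one_add_norm_div_rpow (a b : ℝ) {r : ℝ} (hr : 0 < r) :
    ∫⁻ u, ENNReal.ofReal (‖u‖ ^ a * (1 + ‖u‖ / r) ^ b) ∂μ =
      ENNReal.ofReal (r ^ (finrank ℝ E + a)) *
        ∫⁻ v, ENNReal.ofReal (‖v‖ ^ a * (1 + ‖v‖) ^ b) ∂μ := by
  have hsmul : ∀ v : E, ENNReal.ofReal (‖r • v‖ ^ a * (1 + ‖r • v‖ / r) ^ b) =
      ENNReal.ofReal (r ^ a) * ENNReal.ofReal (‖v‖ ^ a * (1 + ‖v‖) ^ b) := fun v => by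
    rw [norm_smul, Real.norm_of_nonneg hr.le, mul_div_cancel_left₀ _ hr.ne',
      Real.mul_rpow hr.le (norm_nonneg v), mul_assoc, ofReal_mul (by positivity)]
  have hscale := μ.lintegral_comp_smul
    (fun u => ENNReal.ofReal (‖u‖ ^ a * (1 + ‖u‖ / r) ^ b)) hr.ne'
  simp only [hsmul, lintegral_const_mul' _ _ ofReal_ne_top] at hscale
  rw [abs_of_pos (by positivity)] at hscale
  calc _ = ENNReal.ofReal (r ^ finrank ℝ E) * (ENNReal.ofReal (r ^ finrank ℝ E)⁻¹ *
        ∫⁻ u, ENNReal.ofReal (‖u‖ ^ a * (1 + ‖u‖ / r) ^ b) ∂μ) := by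
        rw [← mul_assoc, ← ofReal_mul (by positivity), mul_inv_cancel₀ (by positivity),
          ofReal_one, one_mul]
    _ = _ := by
      rw [← hscale, ← mul_assoc, ← ofReal_mul (by positivity), ← Real.rpow_natCast,
        ← Real.rpow_add hr]

theorem lintegral_ofReal_rpow_norm_mul_one_add_norm_div_rpow_rpow (a b : ℝ) {q r : ℝ}
    (hq : 0 ≤ q) (hr : 0 < r) :
    ∫⁻ u, ENNReal.ofReal (‖u‖ ^ a * (1 + ‖u‖ / r) ^ b) ^ q ∂μ =
      ENNReal.ofReal (r ^ (finrank ℝ E + a * q)) *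
        ∫⁻ v, ENNReal.ofReal (‖v‖ ^ (a * q) * (1 + ‖v‖) ^ (b * q)) ∂μ := by
  have hpow : ∀ u : E, ENNReal.ofReal (‖u‖ ^ a * (1 + ‖u‖ / r) ^ b) ^ q =
      ENNReal.ofReal (‖u‖ ^ (a * q) * (1 + ‖u‖ / r) ^ (b * q)) := fun u => by
    rw [ofReal_rpow_of_nonneg (by positivity) hq, Real.mul_rpow (by positivity) (by positivity),
      ← Real.rpow_mul (norm_nonneg _), ← Real.rpow_mul (by positivity)]
  rw [lintegral_congr hpow, lintegral_rpow_norm_mul_one_add_norm_div_rpow μ _ _ hr]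

theorem lintegral_rpow_norm_mul_one_add_norm_rpow_lt_top {a b : ℝ}
    (ha : -(finrank ℝ E : ℝ) < a) (ha0 : a ≤ 0) (hb : b < -(finrank ℝ E : ℝ)) :
    ∫⁻ v, ENNReal.ofReal (‖v‖ ^ a * (1 + ‖v‖) ^ b) ∂μ < ∞ := by
  have hdim : 1 ≤ finrank ℝ E := by
    have : (0 : ℝ) < finrank ℝ E := by linarith
    exact_mod_cast this
  have hnonneg : ∀ v : E, 0 ≤ ‖v‖ ^ a * (1 + ‖v‖) ^ b := fun v => by positivity
  have hmeas : AEStronglyMeasurable (fun v : E => ‖v‖ ^ a * (1 + ‖v‖) ^ b) μ := by fun_prop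
  refine Integrable.lintegral_lt_top ?_
  rw [← integrableOn_univ, ← union_compl_self (ball (0 : E) 1)]
  refine IntegrableOn.union ?_ ?_
  · refine integrableOn_ball_of_norm_le_rpow hdim (C := 1) (α := -a) (by linarith)
      (Filter.Eventually.of_forall fun v => ?_) hmeas
    rw [Real.norm_of_nonneg (hnonneg v), one_mul, neg_neg]
    exact mul_le_of_le_one_right (by positivity)
      (Real.rpow_le_one_of_one_le_of_nonpos (by linarith [norm_nonneg v]) (by linarith))
  · refine ((integrable_one_add_norm (r := -b) (by linarith)).integrableOn).mono' hmeas.restrict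
      (ae_restrict_of_forall_mem measurableSet_ball.compl fun v hv => ?_)
    have hv : 1 ≤ ‖v‖ := by simpa using hv
    rw [Real.norm_of_nonneg (hnonneg v), neg_neg]
    exact mul_le_of_le_one_left (by positivity) (Real.rpow_le_one_of_one_le_of_nonpos hv ha0)

end Kernel

theorem ENNReal.ofReal_rpow_powers_combine {c : ℝ≥0∞} (hc : c ≠ ∞) {d q r A : ℝ} (hq : 0 < q)
    (hr : 0 < r) :
    ENNReal.ofReal (r ^ (1 - d)) * ((ENNReal.ofReal (r ^ (d + (1 - d) * q)) * c) ^ (1 / q) *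
      (ENNReal.ofReal (r ^ (d - 2)) * ENNReal.ofReal A)) =
      ENNReal.ofReal (c.toReal ^ (1 / q) * A * r ^ (-d + d / q)) := by
  obtain ⟨c, hc0, rfl⟩ : ∃ c' : ℝ, 0 ≤ c' ∧ c = ENNReal.ofReal c' :=
    ⟨c.toReal, toReal_nonneg, (ofReal_toReal hc).symm⟩
  rw [toReal_ofReal hc0, ← ofReal_mul (by positivity),
    ofReal_rpow_of_nonneg (by positivity) (by positivity), ← ofReal_mul (by positivity),
    ← ofReal_mul (by positivity), ← ofReal_mul (by positivity)]
  have hexp :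
      r ^ (1 - d) * r ^ ((d + (1 - d) * q) * (1 / q)) * r ^ (d - 2) = r ^ (-d + d / q) := by
    rw [← Real.rpow_add hr, ← Real.rpow_add hr]
    congr 1
    field_simp
    ring
  rw [← hexp, Real.mul_rpow (by positivity) hc0, ← Real.rpow_mul hr.le]
  ring_nf

theorem stmt_12_general (d : ℕ) (hd : 3 ≤ d) (q γ N : ℝ) (hq : 1 < q)
    (hq' : q < (d : ℝ) / ((d : ℝ) - 1)) (hγ2 : γ ≤ 2) (hN : (d : ℝ) + γ < N) :
    ∃ C > 0, ∀ V : EuclideanSpace ℝ (Fin d) → ℝ, Measurable V → (∀ z, 0 ≤ V z) →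
      ∀ A : ℝ, 0 ≤ A →
      (∀ x : EuclideanSpace ℝ (Fin d),
        ∫⁻ z, ENNReal.ofReal (V z * ‖x - z‖ ^ ((2 : ℝ) - d)) ≤ ENNReal.ofReal A) →
      ∀ r : ℝ, 0 < r → ∀ y₀ : EuclideanSpace ℝ (Fin d),
      (∫⁻ x, (ENNReal.ofReal (r ^ ((1 : ℝ) - d)) *
          ∫⁻ z, ENNReal.ofReal (‖x - z‖ ^ ((1 : ℝ) - d) * (1 + ‖x - z‖ / r) ^ (-N + γ) *
            V z * (1 + ‖z - y₀‖ / r) ^ (-(d : ℝ) + γ))) ^ q) ^ (1 / q) ≤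
        ENNReal.ofReal (C * A * r ^ (-(d : ℝ) + d / q)) := by
  have hd' : (3 : ℝ) ≤ d := by exact_mod_cast hd
  have hq0 : 0 < q := by linarith
  have : NeZero d := ⟨by omega⟩
  have hqd : q * (d - 1) < d := (lt_div_iff₀ (by linarith)).mp hq'
  have hrank : finrank ℝ (EuclideanSpace ℝ (Fin d)) = d := finrank_euclideanSpace_fin
  set c := ∫⁻ v : EuclideanSpace ℝ (Fin d),
    ENNReal.ofReal (‖v‖ ^ ((1 - d) * q) * (1 + ‖v‖) ^ ((-N + γ) * q))
  have hc_lt_top : c < ∞ := lintegral_rpow_norm_mul_one_add_norm_rpow_lt_top _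
    (by rw [hrank]; nlinarith) (by nlinarith) (by rw [hrank]; nlinarith)
  refine ⟨c.toReal ^ (1 / q) + 1, by positivity, fun V hV hV0 A hA hVA r hr y₀ => ?_⟩
  set K : EuclideanSpace ℝ (Fin d) → ℝ≥0∞ :=
    fun u => ENNReal.ofReal (‖u‖ ^ ((1 : ℝ) - d) * (1 + ‖u‖ / r) ^ (-N + γ))
  set W : EuclideanSpace ℝ (Fin d) → ℝ≥0∞ :=
    fun z => ENNReal.ofReal (V z * (1 + ‖z - y₀‖ / r) ^ (-(d : ℝ) + γ))
  have hKq : ∫⁻ u, K u ^ q = ENNReal.ofReal (r ^ (d + (1 - d) * q)) * c := by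
    rw [lintegral_ofReal_rpow_norm_mul_one_add_norm_div_rpow_rpow _ _ _ hq0.le hr, hrank]
  have hWA : ∫⁻ z, W z ≤ ENNReal.ofReal (r ^ ((d : ℝ) - 2)) * ENNReal.ofReal A := calc
    _ ≤ ENNReal.ofReal (r ^ (-(2 - d : ℝ))) *
        ∫⁻ z, ENNReal.ofReal (V z * ‖y₀ - z‖ ^ ((2 : ℝ) - d)) :=
      lintegral_mul_one_add_norm_div_rpow_le hV0 y₀ hr (by linarith) (by linarith)
    _ ≤ _ := by rw [neg_sub]; gcongr; exact hVA y₀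
  have hsplit : ∀ x z, ENNReal.ofReal (‖x - z‖ ^ ((1 : ℝ) - d) * (1 + ‖x - z‖ / r) ^ (-N + γ) *
      V z * (1 + ‖z - y₀‖ / r) ^ (-(d : ℝ) + γ)) = K (x - z) * W z := fun x z => by
    rw [mul_assoc, ofReal_mul (by positivity)]
  simp_rw [hsplit]
  calc _ = ENNReal.ofReal (r ^ ((1 : ℝ) - d)) * (∫⁻ x, (∫⁻ z, K (x - z) * W z) ^ q) ^ (1 / q) :=
        ENNReal.lintegral_const_mul_rpow_rpow_one_div ofReal_ne_top _ hq0
    _ ≤ ENNReal.ofReal (r ^ ((1 : ℝ) - d)) * ((∫⁻ u, K u ^ q) ^ (1 / q) * ∫⁻ z, W z) := by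
        gcongr
        exact lintegral_convolution_rpow_le (by fun_prop) (by fun_prop) hq.le
    _ ≤ ENNReal.ofReal (r ^ ((1 : ℝ) - d)) * ((ENNReal.ofReal (r ^ (d + (1 - d) * q)) * c) ^ (1 / q)
          * (ENNReal.ofReal (r ^ ((d : ℝ) - 2)) * ENNReal.ofReal A)) := by
        rw [hKq]
        gcongr
    _ ≤ _ := by
        rw [ENNReal.ofReal_rpow_powers_combine hc_lt_top.ne hq0 hr]
        exact ofReal_le_ofReal (by gcongr; linarith)

/-- Weighted `L^q` estimate for the term `J₁`: for `d ≥ 3`,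
`1 < q < d/(d-1)`, `0 < γ ≤ 2`, `N > d + γ`, there is `C > 0` such that whenever
`∫ V(z)|x-z|^{2-d} dz ≤ A` for all `x`, and `r > 0`, `y₀ ∈ ℝ^d`,
`‖ r^{1-d} ∫ |x-z|^{1-d}(1+|x-z|/r)^{-N+γ} V(z) (1+|z-y₀|/r)^{-d+γ} dz ‖_{L^q(dx)}
  ≤ C A r^{-d+d/q}`. -/
theorem stmt_12 (d : ℕ) (hd : 3 ≤ d) (q γ N : ℝ) (hq : 1 < q)
    (hq' : q < (d : ℝ) / ((d : ℝ) - 1)) (hγ : 0 < γ) (hγ2 : γ ≤ 2) (hN : (d : ℝ) + γ < N) :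
    ∃ C > 0, ∀ V : EuclideanSpace ℝ (Fin d) → ℝ, Measurable V → (∀ z, 0 ≤ V z) →
      ∀ A : ℝ, 0 ≤ A →
      (∀ x : EuclideanSpace ℝ (Fin d),
        ∫⁻ z, ENNReal.ofReal (V z * ‖x - z‖ ^ ((2 : ℝ) - d)) ≤ ENNReal.ofReal A) →
      ∀ r : ℝ, 0 < r → ∀ y₀ : EuclideanSpace ℝ (Fin d),
      (∫⁻ x, (ENNReal.ofReal (r ^ ((1 : ℝ) - d)) *
          ∫⁻ z, ENNReal.ofReal (‖x - z‖ ^ ((1 : ℝ) - d) * (1 + ‖x - z‖ / r) ^ (-N + γ) *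
            V z * (1 + ‖z - y₀‖ / r) ^ (-(d : ℝ) + γ))) ^ q) ^ (1 / q) ≤
        ENNReal.ofReal (C * A * r ^ (-(d : ℝ) + d / q)) :=
  stmt_12_general d hd q γ N hq hq' hγ2 hN
end
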